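/- arXiv:2504.04931 — 4 statements merged into one kernel-verified Lean document; each statement's English description precedes it below -/
import Mathlib

section
/- For all integers n ≥ 1 and all reals M > 0, γ > 0, there exists C > 0 depending only on n, M and γ such that: every even, strictly convex admissible support function H : ℝ^{n+1} → ℝ satisfying the gradient bound |∇H(x)|² − H(x)² ≤ M·(sup_{S^n} H)^{2−γ}·H(x)^γ for all x ∈ S^n (i.e., |∇h|²/h^γ ≤ M·R^{2−γ} on S^n, where h = H|_{S^n} and R = max_{S^n} h) also satisfies the non-collapsing estimate sup_{S^n} H ≤ C·inf_{S^n} H. -/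
set_option maxHeartbeats 1000000

open MeasureTheory

noncomputable section

/-- Euclidean space `ℝ^{n+1}`. -/
abbrev Esp (n : ℕ) := EuclideanSpace ℝ (Fin (n + 1))

/-- The unit sphere `S^n ⊂ ℝ^{n+1}`. -/
def unitSphere (n : ℕ) : Set (Esp n) := Metric.sphere 0 1

/-- The Hessian matrix `A(x)` of `H` at `x`, in the standard basis. -/
def hessMatrix (n : ℕ) (H : Esp n → ℝ) (x : Esp n) :
    Matrix (Fin (n + 1)) (Fin (n + 1)) ℝ :=
  Matrix.of fun i j =>
    iteratedFDeriv ℝ 2 H x ![EuclideanSpace.single i 1, EuclideanSpace.single j 1]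

/-- The `k`-th elementary symmetric function of the eigenvalues of a matrix, read off
from the characteristic polynomial: `charpoly A = ∑ⱼ (-1)ʲ eⱼ(A) X^(n+1-j)`. -/
def esymmMat (n k : ℕ) (A : Matrix (Fin (n + 1)) (Fin (n + 1)) ℝ) : ℝ :=
  (-1 : ℝ) ^ k * A.charpoly.coeff (n + 1 - k)

/-- An admissible support function: convex, positively 1-homogeneous, positive on the
unit sphere and `C^∞` away from the origin. -/
def IsAdmissible (n : ℕ) (H : Esp n → ℝ) : Prop :=
  ConvexOn ℝ Set.univ H ∧
  (∀ t : ℝ, 0 ≤ t → ∀ y : Esp n, H (t • y) = t * H y) ∧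
  (∀ x ∈ unitSphere n, 0 < H x) ∧
  ContDiffOn ℝ (⊤ : ℕ∞) H {0}ᶜ

/-- Strict convexity: the Hessian `A(x)` is positive definite on the tangent space
`x^⊥`, for every `x` in the unit sphere. -/
def IsStrictlyConvexSupp (n : ℕ) (H : Esp n → ℝ) : Prop :=
  ∀ x ∈ unitSphere n, ∀ v : Esp n, (inner ℝ v x : ℝ) = 0 → v ≠ 0 →
    0 < ∑ i, ∑ j, hessMatrix n H x i j * v i * v j

/-- `H` is even. -/
def IsEvenFn (n : ℕ) (H : Esp n → ℝ) : Prop := ∀ y : Esp n, H (-y) = H y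

/-- `H` solves `e_k(A(x)) = f(x) · H(x)^(p-1) · |∇H(x)|^(k+1-q)` on the unit sphere,
the support-function formulation of `σ_k(∇²h + hI) = f·h^(p-1)·(h² + |∇h|²)^((k+1-q)/2)`. -/
def SolvesEq (n k : ℕ) (p q : ℝ) (f H : Esp n → ℝ) : Prop :=
  ∀ x ∈ unitSphere n,
    esymmMat n k (hessMatrix n H x) =
      f x * H x ^ (p - 1) * ‖gradient H x‖ ^ ((k : ℝ) + 1 - q)

/-- `f` is `C^∞` as a function on the unit sphere (its 0-homogeneous extension is
smooth away from the origin). -/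
def SmoothOnSphere (n : ℕ) (f : Esp n → ℝ) : Prop :=
  ContDiffOn ℝ (⊤ : ℕ∞) (fun y : Esp n => f (‖y‖⁻¹ • y)) {0}ᶜ

/-- Condition (f1) for `(k,p)`: the 1-homogeneous extension of `f^(-1/(k+p-1))` is
convex on `ℝ^{n+1}`, i.e. `∇²(f^(-1/(k+p-1))) + f^(-1/(k+p-1))·I ≥ 0` on `S^n`. -/
def CondF1 (n k : ℕ) (p : ℝ) (f : Esp n → ℝ) : Prop :=
  ConvexOn ℝ Set.univ
    (fun y : Esp n => ‖y‖ * f (‖y‖⁻¹ • y) ^ (-(1 / ((k : ℝ) + p - 1))))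

open Set Real
open scoped RealInnerProductSpace

/-- Subgradient inequality for a convex differentiable function. -/
theorem aux_convex_support_ineq {E : Type*} [NormedAddCommGroup E] [NormedSpace ℝ E]
    {H : E → ℝ} (hconv : ConvexOn ℝ Set.univ H) {x : E} {φ : E →L[ℝ] ℝ}
    (hd : HasFDerivAt H φ x) (y : E) : H x + φ (y - x) ≤ H y := by
  rcases eq_or_ne y x with rfl | hne
  · simp
  have hq : ConvexOn ℝ Set.univ (H ∘ (AffineMap.lineMap x y : ℝ →ᵃ[ℝ] E)) := by
    simpa using hconv.comp_affineMap (AffineMap.lineMap x y)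
  have hlin : HasDerivAt (fun t : ℝ => (AffineMap.lineMap x y : ℝ →ᵃ[ℝ] E) t) (y - x) 0 := by
    have : HasDerivAt (fun t : ℝ => t • (y - x) + x) (y - x) 0 := by
      simpa using ((hasDerivAt_id (0:ℝ)).smul_const (y - x)).add_const x
    refine this.congr_of_eventuallyEq (Filter.Eventually.of_forall fun t => ?_)
    show _ = t • (y - x) + x
    simp [AffineMap.lineMap_apply_module]
    module
  have hc : HasDerivAt (H ∘ (AffineMap.lineMap x y : ℝ →ᵃ[ℝ] E)) (φ (y - x)) 0 := by
    have h0 : (AffineMap.lineMap x y : ℝ →ᵃ[ℝ] E) (0:ℝ) = x := by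
      simp
    have hd' : HasFDerivAt H φ ((AffineMap.lineMap x y : ℝ →ᵃ[ℝ] E) (0:ℝ)) := by rw [h0]; exact hd
    exact hd'.comp_hasDerivAt 0 hlin
  have hs := hq.le_slope_of_hasDerivAt (mem_univ (0:ℝ)) (mem_univ (1:ℝ)) one_pos hc
  have hsl : slope (H ∘ (AffineMap.lineMap x y : ℝ →ᵃ[ℝ] E)) 0 1 = H y - H x := by
    simp [slope_def_field, AffineMap.lineMap_apply_module]
  rw [hsl] at hs
  linarith

/-- Euler relation for a positively 1-homogeneous function. -/
theorem aux_euler_relation {E : Type*} [NormedAddCommGroup E] [NormedSpace ℝ E]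
    {H : E → ℝ} (hhom : ∀ t : ℝ, 0 ≤ t → ∀ y : E, H (t • y) = t * H y)
    {x : E} {φ : E →L[ℝ] ℝ} (hd : HasFDerivAt H φ x) : φ x = H x := by
  have hlin : HasDerivAt (fun t : ℝ => t • x) ((1:ℝ) • x) 1 := (hasDerivAt_id (1:ℝ)).smul_const x
  have hc : HasDerivAt (fun t : ℝ => H (t • x)) (φ x) 1 := by
    have hd' : HasFDerivAt H φ ((1:ℝ) • x) := by rw [one_smul]; exact hd
    have := hd'.comp_hasDerivAt 1 hlin
    rw [one_smul] at this; exact this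
  have hc2 : HasDerivAt (fun t : ℝ => t * H x) (φ x) 1 := by
    refine hc.congr_of_eventuallyEq ?_
    filter_upwards [Ioi_mem_nhds (zero_lt_one (α := ℝ))] with t ht
    exact (hhom t (le_of_lt ht) x).symm
  have hc3 : HasDerivAt (fun t : ℝ => t * H x) (H x) 1 := by
    simpa using (hasDerivAt_id (1:ℝ)).mul_const (H x)
  exact hc2.unique hc3

private lemma aux_sq_one {a : ℝ} (ha : 0 ≤ a) (h : a ^ 2 = 1) : a = 1 := by
  have h2 : (a - 1) * (a + 1) = 0 := by ring_nf; linarith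
  rcases mul_eq_zero.1 h2 with h | h
  · linarith
  · linarith

/-- **Lemma 3.2 (non-collapsing estimate).** If an even, strictly convex admissible
support function satisfies `|∇h|²/h^γ ≤ M·R^(2-γ)` on the sphere, then `R/r ≤ C`,
where `C` depends only on `n`, `M` and `γ`. -/
theorem non_collapsing_estimate
    (n : ℕ) (hn : 1 ≤ n) (M γ : ℝ) (hM : 0 < M) (hγ : 0 < γ) :
    ∃ C : ℝ, 0 < C ∧
      ∀ H : Esp n → ℝ, IsAdmissible n H → IsEvenFn n H → IsStrictlyConvexSupp n H →
        (∀ x ∈ unitSphere n,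
          ‖gradient H x‖ ^ 2 - H x ^ 2 ≤
            M * sSup (H '' unitSphere n) ^ (2 - γ) * H x ^ γ) →
        sSup (H '' unitSphere n) ≤ C * sInf (H '' unitSphere n) := by
  have hπ : (0:ℝ) < π := Real.pi_pos
  set β : ℝ := min γ 2 / 2 with hβdef
  have hβpos : 0 < β := by
    have : 0 < min γ 2 := lt_min hγ two_pos
    positivity
  have hβle : β ≤ 1 := by
    have : min γ 2 ≤ 2 := min_le_right _ _
    rw [hβdef]; linarith
  have h2βγ : 2 * β ≤ γ := by
    have : min γ 2 ≤ γ := min_le_left _ _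
    rw [hβdef]; linarith
  set K : ℝ := Real.sqrt M * (2 / π) ^ (β - 1) with hKdef
  have hKpos : 0 < K := by
    have h1 : (0:ℝ) < Real.sqrt M := Real.sqrt_pos.2 hM
    have h2 : (0:ℝ) < (2 / π) ^ (β - 1) := Real.rpow_pos_of_pos (by positivity) _
    positivity
  set L : ℝ := K / β * (π / 2) ^ β with hLdef
  have hLpos : 0 < L := by
    have : (0:ℝ) < (π / 2) ^ β := Real.rpow_pos_of_pos (by positivity) _
    positivity
  refine ⟨Real.exp L, Real.exp_pos L, ?_⟩
  intro H hadm heven _ hgrad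
  obtain ⟨hconv, hhom, hpos, hsm⟩ := hadm
  have hmemS : ∀ x : Esp n, x ∈ unitSphere n ↔ ‖x‖ = 1 := fun x =>
    mem_sphere_zero_iff_norm
  have hne0 : ∀ x ∈ unitSphere n, x ≠ (0 : Esp n) := by
    intro x hx h0
    rw [hmemS] at hx; rw [h0] at hx; simp at hx
  have hdiff : ∀ x : Esp n, x ≠ 0 → DifferentiableAt ℝ H x := fun x hx =>
    (hsm.contDiffAt (isOpen_compl_singleton.mem_nhds hx)).differentiableAt (by simp)
  have gradrel : ∀ x : Esp n, x ≠ 0 → ∀ v : Esp n,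
      (fderiv ℝ H x) v = ⟪gradient H x, v⟫ := by
    intro x hx v
    have h1 : HasFDerivAt H ((InnerProductSpace.toDual ℝ (Esp n)) (gradient H x)) x :=
      ((hdiff x hx).hasGradientAt).hasFDerivAt
    rw [h1.fderiv]
    simp [InnerProductSpace.toDual_apply_apply]
  have hcont : ContinuousOn H {(0 : Esp n)}ᶜ := hsm.continuousOn
  have hcontS : ContinuousOn H (unitSphere n) := hcont.mono (fun x hx => hne0 x hx)
  have hSne : (unitSphere n).Nonempty := by
    refine ⟨EuclideanSpace.single 0 1, ?_⟩
    rw [hmemS]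
    simp [EuclideanSpace.norm_single]
  have hScomp : IsCompact (unitSphere n) := isCompact_sphere 0 1
  obtain ⟨x0, hx0S, hx0max⟩ := hScomp.exists_isMaxOn hSne hcontS
  have hx0max' : ∀ y ∈ unitSphere n, H y ≤ H x0 := fun y hy => hx0max hy
  set R : ℝ := sSup (H '' unitSphere n) with hRdef
  have hReq : R = H x0 := by
    apply IsGreatest.csSup_eq
    exact ⟨Set.mem_image_of_mem H hx0S, by rintro b ⟨y, hy, rfl⟩; exact hx0max' y hy⟩
  have hRpos : 0 < R := by rw [hReq]; exact hpos x0 hx0S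
  have hleR : ∀ x ∈ unitSphere n, H x ≤ R := by
    intro x hx; rw [hReq]; exact hx0max' x hx
  have hx0ne : x0 ≠ 0 := hne0 x0 hx0S
  have heuler : ∀ x : Esp n, x ≠ 0 → ⟪gradient H x, x⟫ = H x := by
    intro x hx
    rw [← gradrel x hx x]
    exact aux_euler_relation hhom (hdiff x hx).hasFDerivAt
  set z0 : Esp n := gradient H x0 with hz0def
  clear_value z0
  have hz0x0 : ⟪z0, x0⟫ = R := by rw [hReq, hz0def]; exact heuler x0 hx0ne
  have hsupp : ∀ y : Esp n, ⟪z0, y⟫ ≤ H y := by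
    intro y
    have h1 := aux_convex_support_ineq hconv (hdiff x0 hx0ne).hasFDerivAt y
    rw [gradrel x0 hx0ne (y - x0), inner_sub_right, ← hz0def] at h1
    have hx0H : ⟪z0, x0⟫ = H x0 := by rw [hz0x0, hReq]
    linarith
  have habs : ∀ y : Esp n, |⟪z0, y⟫| ≤ H y := by
    intro y
    rw [abs_le]
    constructor
    · have h2 := hsupp (-y)
      rw [inner_neg_right, heven y] at h2
      linarith
    · exact hsupp y
  have hz0ne : z0 ≠ 0 := by
    intro h
    rw [h, inner_zero_left] at hz0x0
    linarith
  have hz0norm : ‖z0‖ = R := by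
    have hge : R ≤ ‖z0‖ := by
      have h1 := real_inner_le_norm z0 x0
      have h2 : ‖x0‖ = 1 := (hmemS x0).1 hx0S
      rw [hz0x0, h2, mul_one] at h1
      exact h1
    have hle : ‖z0‖ ≤ R := by
      have hu' : ‖z0‖⁻¹ • z0 ∈ unitSphere n := by
        rw [hmemS]; exact norm_smul_inv_norm (𝕜 := ℝ) hz0ne
      have h1 : ⟪z0, ‖z0‖⁻¹ • z0⟫ = ‖z0‖ := by
        rw [real_inner_smul_right, real_inner_self_eq_norm_mul_norm]
        have : ‖z0‖ ≠ 0 := norm_ne_zero_iff.2 hz0ne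
        field_simp
      have h2 := hsupp (‖z0‖⁻¹ • z0)
      rw [h1] at h2
      exact h2.trans (hleR _ hu')
    exact le_antisymm hle hge
  set u : Esp n := ‖z0‖⁻¹ • z0 with hudef
  have huS : u ∈ unitSphere n := by
    rw [hmemS]; exact norm_smul_inv_norm (𝕜 := ℝ) hz0ne
  have hun : ‖u‖ = 1 := (hmemS u).1 huS
  have hbarrier : ∀ y : Esp n, R * ⟪u, y⟫ ≤ H y := by
    intro y
    have h1 : ⟪u, y⟫ = R⁻¹ * ⟪z0, y⟫ := by
      rw [hudef, real_inner_smul_left, hz0norm]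
    rw [h1, ← mul_assoc, mul_inv_cancel₀ hRpos.ne', one_mul]
    exact hsupp y
  have huu : ⟪u, u⟫ = (1:ℝ) := by
    rw [real_inner_self_eq_norm_mul_norm, hun]; ring
  have huH : H u = R := by
    refine le_antisymm (hleR u huS) ?_
    have h1 := hbarrier u
    rw [huu, mul_one] at h1
    exact h1
  clear_value u
  clear hz0x0 hsupp habs hz0ne hz0norm hudef z0 hz0def
  -- main pointwise estimate
  have key : ∀ x ∈ unitSphere n, 0 ≤ ⟪u, x⟫ → R * Real.exp (-L) ≤ H x := by
    intro x hxS hxu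
    have hxn : ‖x‖ = 1 := (hmemS x).1 hxS
    set t : ℝ := ⟪u, x⟫ with htdef
    clear_value t
    have ht1 : t ≤ 1 := by
      have h1 := real_inner_le_norm u x
      rw [hun, hxn, mul_one] at h1
      rw [htdef]; exact h1
    by_cases hw0 : x - t • u = 0
    · have hx_eq : x = t • u := by rwa [sub_eq_zero] at hw0
      have ht : t = 1 := by
        have h1 : ‖x‖ = t := by
          rw [hx_eq, norm_smul, hun, mul_one, Real.norm_eq_abs, abs_of_nonneg hxu]
        rw [hxn] at h1; exact h1.symm
      have hxu' : x = u := by rw [hx_eq, ht, one_smul]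
      rw [hxu', huH]
      have hexp : Real.exp (-L) ≤ 1 := Real.exp_le_one_iff.2 (by linarith)
      nlinarith
    · set w : Esp n := x - t • u with hwdef
      have hρpos : 0 < ‖w‖ := norm_pos_iff.2 hw0
      set ρ : ℝ := ‖w‖ with hρdef
      set e : Esp n := ρ⁻¹ • w with hedef
      have hen : ‖e‖ = 1 := norm_smul_inv_norm (𝕜 := ℝ) hw0
      have huw : ⟪u, w⟫ = 0 := by
        rw [hwdef, inner_sub_right, real_inner_smul_right, huu]
        rw [htdef]; ring
      have hue : ⟪u, e⟫ = 0 := by rw [hedef, real_inner_smul_right, huw, mul_zero]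
      have heu : ⟪e, u⟫ = 0 := by rw [real_inner_comm]; exact hue
      have hee : ⟪e, e⟫ = (1:ℝ) := by
        rw [real_inner_self_eq_norm_mul_norm, hen]; ring
      have hxsum : x = t • u + w := by rw [hwdef]; abel
      have hw_e : w = ρ • e := by
        rw [hedef, smul_inv_smul₀ hρpos.ne']
      have pyth : t ^ 2 + ρ ^ 2 = 1 := by
        have h1 : ‖x‖ ^ 2 = ‖t • u‖ ^ 2 + 2 * ⟪t • u, w⟫ + ‖w‖ ^ 2 := by
          rw [hxsum]; exact norm_add_sq_real _ _
        rw [real_inner_smul_left, huw, norm_smul, hun, hxn, Real.norm_eq_abs] at h1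
        norm_num at h1
        have habs2 : |t| ^ 2 = t ^ 2 := sq_abs t
        nlinarith [h1, habs2]
      have htlt1 : t < 1 := by nlinarith
      clear_value e
      clear hedef hwdef
      clear_value w
      clear_value ρ
      set d : ℝ := Real.arccos t with hddef
      have hd0 : 0 < d := Real.arccos_pos.2 htlt1
      have hdle : d ≤ π / 2 := Real.arccos_le_pi_div_two.2 hxu
      have hcosd : Real.cos d = t := Real.cos_arccos (by linarith) ht1
      have hsind : Real.sin d = ρ := by
        rw [hddef, Real.sin_arccos]
        have h1 : 1 - t ^ 2 = ρ ^ 2 := by linarith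
        rw [h1, Real.sqrt_sq hρpos.le]
      clear_value d
      set c : ℝ → Esp n := fun s => Real.cos s • u + Real.sin s • e with hcdef
      have hc0 : c 0 = u := by simp [hcdef]
      have hcd : c d = x := by
        simp only [hcdef]
        rw [hcosd, hsind, ← hw_e, ← hxsum]
      have hnorm_ab : ∀ a b : ℝ, a ^ 2 + b ^ 2 = 1 → ‖a • u + b • e‖ = 1 := by
        intro a b hab
        have h1 : ‖a • u + b • e‖ ^ 2 = 1 := by
          rw [norm_add_sq_real, real_inner_smul_left, real_inner_smul_right, hue,
            norm_smul, norm_smul, hun, hen]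
          simp only [mul_one, mul_zero, Real.norm_eq_abs]
          rw [sq_abs, sq_abs]
          linarith
        exact aux_sq_one (norm_nonneg _) h1
      have hcnorm : ∀ s, ‖c s‖ = 1 := by
        intro s
        exact hnorm_ab _ _ (by nlinarith [Real.sin_sq_add_cos_sq s])
      have hcS : ∀ s, c s ∈ unitSphere n := fun s => (hmemS _).2 (hcnorm s)
      have hcne : ∀ s, c s ≠ 0 := fun s => hne0 _ (hcS s)
      have hcu : ∀ s, ⟪u, c s⟫ = Real.cos s := by
        intro s
        simp only [hcdef]
        rw [inner_add_right, real_inner_smul_right, real_inner_smul_right, huu, hue]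
        ring
      have hbar : ∀ s, R * Real.cos s ≤ H (c s) := by
        intro s
        have := hbarrier (c s)
        rwa [hcu s] at this
      set g : ℝ → ℝ := fun s => H (c s) with hgdef
      have hgpos : ∀ s, 0 < g s := fun s => hpos _ (hcS s)
      set c' : ℝ → Esp n := fun s => (-Real.sin s) • u + Real.cos s • e with hc'def
      have hc'norm : ∀ s, ‖c' s‖ = 1 := by
        intro s
        exact hnorm_ab _ _ (by nlinarith [Real.sin_sq_add_cos_sq s])
      have hcder : ∀ s, HasDerivAt c (c' s) s := by
        intro s
        have h1 : HasDerivAt (fun s : ℝ => Real.cos s • u) ((-Real.sin s) • u) s :=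
          (Real.hasDerivAt_cos s).smul_const u
        have h2 : HasDerivAt (fun s : ℝ => Real.sin s • e) (Real.cos s • e) s :=
          (Real.hasDerivAt_sin s).smul_const e
        exact h1.add h2
      have hgder : ∀ s, HasDerivAt g (⟪gradient H (c s), c' s⟫) s := by
        intro s
        have h1 := ((hdiff _ (hcne s)).hasFDerivAt).comp_hasDerivAt s (hcder s)
        rw [gradrel _ (hcne s) (c' s)] at h1
        exact h1
      have hcc' : ∀ s, ⟪c s, c' s⟫ = 0 := by
        intro s
        simp only [hcdef, hc'def]
        rw [inner_add_left, inner_add_right, inner_add_right,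
          real_inner_smul_left, real_inner_smul_left, real_inner_smul_left,
          real_inner_smul_left, real_inner_smul_right, real_inner_smul_right,
          real_inner_smul_right, real_inner_smul_right, huu, hue, heu, hee]
        ring
      have heulc : ∀ s, ⟪gradient H (c s), c s⟫ = g s := fun s => heuler _ (hcne s)
      have htang : ∀ s, ⟪gradient H (c s), c' s⟫ ^ 2 ≤ ‖gradient H (c s)‖ ^ 2 - g s ^ 2 := by
        intro s
        have h0 : ⟪gradient H (c s), c' s⟫ = ⟪gradient H (c s) - g s • c s, c' s⟫ := by
          rw [inner_sub_left, real_inner_smul_left, hcc' s, mul_zero, sub_zero]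
        have h1 : |⟪gradient H (c s) - g s • c s, c' s⟫|
            ≤ ‖gradient H (c s) - g s • c s‖ * ‖c' s‖ := abs_real_inner_le_norm _ _
        rw [hc'norm s, mul_one] at h1
        have h2 : ‖gradient H (c s) - g s • c s‖ ^ 2 = ‖gradient H (c s)‖ ^ 2 - g s ^ 2 := by
          have e1 := norm_sub_sq_real (gradient H (c s)) (g s • c s)
          rw [real_inner_smul_right, heulc s] at e1
          have e2 : ‖g s • c s‖ = |g s| := by
            rw [norm_smul, hcnorm s, mul_one, Real.norm_eq_abs]
          rw [e2, sq_abs] at e1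
          rw [e1]; ring
        calc ⟪gradient H (c s), c' s⟫ ^ 2
            = |⟪gradient H (c s) - g s • c s, c' s⟫| ^ 2 := by rw [← h0, sq_abs]
          _ ≤ ‖gradient H (c s) - g s • c s‖ ^ 2 := by
              exact pow_le_pow_left₀ (abs_nonneg _) h1 2
          _ = ‖gradient H (c s)‖ ^ 2 - g s ^ 2 := h2
      -- derivative bound on the open interval
      have hDbound : ∀ s ∈ Set.Ioo (0:ℝ) d,
          |⟪gradient H (c s), c' s⟫| ≤ K * (π/2 - s) ^ (β - 1) * g s := by
        intro s hs
        have hsπ : s < π/2 := lt_of_lt_of_le hs.2 hdle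
        have hcoss : 0 < Real.cos s :=
          Real.cos_pos_of_mem_Ioo ⟨by linarith [hs.1], hsπ⟩
        have hgs := hgpos s
        have hgsR : g s ≤ R := hleR _ (hcS s)
        have hbars : R * Real.cos s ≤ g s := hbar s
        have hRc : 0 < R * Real.cos s := by positivity
        have h1 : ‖gradient H (c s)‖ ^ 2 - g s ^ 2 ≤ M * R ^ (2-γ) * (g s) ^ γ :=
          hgrad _ (hcS s)
        -- exponent juggling
        have e2 : (g s) ^ (γ - 2*β) ≤ R ^ (γ - 2*β) :=
          Real.rpow_le_rpow hgs.le hgsR (by linarith)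
        have e4 : (g s) ^ (2*β - 2) ≤ (R * Real.cos s) ^ (2*β - 2) :=
          Real.rpow_le_rpow_of_nonpos hRc hbars (by linarith)
        have esplit : (g s) ^ γ = (g s) ^ (γ - 2*β) * ((g s) ^ (2*β - 2) * (g s) ^ (2:ℝ)) := by
          rw [← Real.rpow_add hgs, ← Real.rpow_add hgs]
          congr 1
          ring
        have hgs2 : (g s) ^ (2:ℝ) = g s ^ 2 := by
          rw [show (2:ℝ) = ((2:ℕ):ℝ) by norm_num, Real.rpow_natCast]
        have emul : (R * Real.cos s) ^ (2*β - 2) = R ^ (2*β-2) * Real.cos s ^ (2*β-2) :=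
          Real.mul_rpow hRpos.le hcoss.le
        have eRpow : R ^ (2-γ) * (R ^ (γ - 2*β) * R ^ (2*β-2)) = 1 := by
          rw [← Real.rpow_add hRpos, ← Real.rpow_add hRpos]
          have h9 : (2-γ) + ((γ-2*β) + (2*β-2)) = 0 := by ring
          rw [h9, Real.rpow_zero]
        have h2 : M * R ^ (2-γ) * (g s) ^ γ ≤ M * Real.cos s ^ (2*β-2) * g s ^ 2 := by
          have step : (g s) ^ γ ≤ R ^ (γ - 2*β) * ((R * Real.cos s) ^ (2*β - 2) * (g s) ^ (2:ℝ)) := by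
            rw [esplit]
            have t2 : (0:ℝ) ≤ (g s) ^ (2:ℝ) := Real.rpow_nonneg hgs.le _
            have t3 : (0:ℝ) ≤ (g s) ^ (2*β - 2) := Real.rpow_nonneg hgs.le _
            exact mul_le_mul e2 (mul_le_mul_of_nonneg_right e4 t2) (mul_nonneg t3 t2)
              (Real.rpow_nonneg hRpos.le _)
          calc M * R ^ (2-γ) * (g s) ^ γ
              ≤ M * R ^ (2-γ) * (R ^ (γ - 2*β) * ((R * Real.cos s) ^ (2*β - 2) * (g s) ^ (2:ℝ))) :=
                mul_le_mul_of_nonneg_left step (by positivity)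
            _ = M * Real.cos s ^ (2*β-2) * g s ^ 2 := by
                rw [emul, hgs2]
                have : M * R ^ (2-γ) * (R ^ (γ - 2*β) * (R ^ (2*β-2) * Real.cos s ^ (2*β-2) * g s ^ 2))
                    = M * (R ^ (2-γ) * (R ^ (γ - 2*β) * R ^ (2*β-2))) * Real.cos s ^ (2*β-2) * g s ^ 2 := by
                  ring
                rw [this, eRpow, mul_one]
        -- take square roots
        have hB : (0:ℝ) ≤ Real.sqrt M * Real.cos s ^ (β-1) * g s := by positivity
        have hsq : ⟪gradient H (c s), c' s⟫ ^ 2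
            ≤ (Real.sqrt M * Real.cos s ^ (β-1) * g s) ^ 2 := by
          have hcossq : (Real.cos s ^ (β-1)) ^ 2 = Real.cos s ^ (2*β-2) := by
            rw [← Real.rpow_natCast (Real.cos s ^ (β-1)) 2, ← Real.rpow_mul hcoss.le]
            congr 1
            push_cast
            ring
          have hBsq : (Real.sqrt M * Real.cos s ^ (β-1) * g s) ^ 2
              = M * Real.cos s ^ (2*β-2) * g s ^ 2 := by
            rw [mul_pow, mul_pow, Real.sq_sqrt hM.le, hcossq]
          rw [hBsq]
          linarith [htang s, h1, h2]
        have h3 : |⟪gradient H (c s), c' s⟫| ≤ Real.sqrt M * Real.cos s ^ (β-1) * g s :=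
          abs_le_of_sq_le_sq hsq hB
        -- compare cos with linear function
        have hcos_lb : 2/π * (π/2 - s) ≤ Real.cos s := by
          have h4 := Real.one_sub_mul_le_cos hs.1.le hsπ.le
          have e5 : 2/π * (π/2 - s) = 1 - 2/π * s := by
            field_simp
          rw [e5]
          exact h4
        have h5 : Real.cos s ^ (β-1) ≤ (2/π) ^ (β-1) * (π/2 - s) ^ (β-1) := by
          have hb0 : (0:ℝ) < 2/π * (π/2 - s) := by
            have : 0 < π/2 - s := by linarith
            positivity
          have h6 := Real.rpow_le_rpow_of_nonpos hb0 hcos_lb (by linarith : β - 1 ≤ 0)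
          rwa [Real.mul_rpow (by positivity) (by linarith : (0:ℝ) ≤ π/2 - s)] at h6
        calc |⟪gradient H (c s), c' s⟫|
            ≤ Real.sqrt M * Real.cos s ^ (β-1) * g s := h3
          _ ≤ Real.sqrt M * ((2/π) ^ (β-1) * (π/2 - s) ^ (β-1)) * g s :=
              mul_le_mul_of_nonneg_right
                (mul_le_mul_of_nonneg_left h5 (Real.sqrt_nonneg M)) hgs.le
          _ = K * (π/2 - s) ^ (β - 1) * g s := by rw [hKdef]; ring
      -- the monotone quantity
      set φ : ℝ → ℝ := fun s => Real.log (g s) - K/β * (π/2 - s) ^ β with hφdef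
      have hccont : Continuous c := by
        simp only [hcdef]
        exact (Real.continuous_cos.smul continuous_const).add
          (Real.continuous_sin.smul continuous_const)
      have hφcont : ContinuousOn φ (Set.Icc 0 d) := by
        apply ContinuousOn.sub
        · apply ContinuousOn.log
          · exact hcont.comp hccont.continuousOn (fun s _ => hcne s)
          · intro s _; exact (hgpos s).ne'
        · apply Continuous.continuousOn
          exact continuous_const.mul
            ((continuous_const.sub continuous_id).rpow_const (fun s => Or.inr hβpos.le))
      have hφder : ∀ s ∈ Set.Ioo (0:ℝ) d, HasDerivAt φ
          (⟪gradient H (c s), c' s⟫ / g s + K * (π/2 - s) ^ (β-1)) s := by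
        intro s hs
        have hsπ : s < π/2 := lt_of_lt_of_le hs.2 hdle
        have hlog : HasDerivAt (fun s => Real.log (g s)) (⟪gradient H (c s), c' s⟫ / g s) s :=
          (hgder s).log (hgpos s).ne'
        have hbase : (π/2 - s) ≠ 0 := by
          have : 0 < π/2 - s := by linarith
          exact this.ne'
        have h1 : HasDerivAt (fun y : ℝ => y ^ β) (β * (π/2 - s) ^ (β-1)) (π/2 - s) :=
          Real.hasDerivAt_rpow_const (Or.inl hbase)
        have h2 : HasDerivAt (fun s : ℝ => π/2 - s) (-1) s := by
          simpa using (hasDerivAt_id s).const_sub (π/2)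
        have hpow : HasDerivAt (fun s : ℝ => (π/2 - s) ^ β) (β * (π/2 - s) ^ (β-1) * (-1)) s :=
          h1.comp s h2
        have := hlog.sub (hpow.const_mul (K/β))
        refine this.congr_deriv ?_
        have hKβ : K / β * β = K := div_mul_cancel₀ K hβpos.ne'
        linear_combination ((π/2 - s) ^ (β-1)) * hKβ
      have hφmono : MonotoneOn φ (Set.Icc 0 d) := by
        apply monotoneOn_of_hasDerivWithinAt_nonneg (convex_Icc 0 d) hφcont
          (f' := fun s => ⟪gradient H (c s), c' s⟫ / g s + K * (π/2 - s) ^ (β-1))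
        · intro s hs
          rw [interior_Icc] at hs
          exact (hφder s hs).hasDerivWithinAt
        · intro s hs
          rw [interior_Icc] at hs
          have hD := hDbound s hs
          have hgs := hgpos s
          have h5 : 0 ≤ ⟪gradient H (c s), c' s⟫ + K * (π/2 - s) ^ (β-1) * g s := by
            have := neg_abs_le ⟪gradient H (c s), c' s⟫
            linarith
          have heq : ⟪gradient H (c s), c' s⟫ / g s + K * (π/2 - s) ^ (β-1)
              = (⟪gradient H (c s), c' s⟫ + K * (π/2 - s) ^ (β-1) * g s) / g s := by
            field_simp
          rw [heq]
          exact div_nonneg h5 hgs.le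
      have h0d : φ 0 ≤ φ d := hφmono ⟨le_refl 0, hd0.le⟩ ⟨hd0.le, le_refl d⟩ hd0.le
      have hg0 : g 0 = R := by simp only [hgdef]; rw [hc0, huH]
      have hgd : g d = H x := by simp only [hgdef]; rw [hcd]
      have e0 : φ 0 = Real.log R - K/β * (π/2) ^ β := by
        simp only [hφdef]; rw [hg0]; norm_num
      have ed : φ d = Real.log (H x) - K/β * (π/2 - d) ^ β := by
        simp only [hφdef]; rw [hgd]
      have hnn : 0 ≤ K/β * (π/2 - d) ^ β := by
        have h6 : (0:ℝ) ≤ (π/2 - d) ^ β := Real.rpow_nonneg (by linarith) _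
        positivity
      have hlog2 : Real.log R - L ≤ Real.log (H x) := by
        rw [e0, ed] at h0d
        rw [hLdef]
        linarith
      have h7 := Real.exp_le_exp.2 hlog2
      rw [Real.exp_sub, Real.exp_log hRpos, Real.exp_log (hpos x hxS)] at h7
      rw [Real.exp_neg, ← div_eq_mul_inv]
      exact h7
  have key2 : ∀ x ∈ unitSphere n, R * Real.exp (-L) ≤ H x := by
    intro x hx
    rcases le_or_gt 0 ⟪u, x⟫ with h | h
    · exact key x hx h
    · have hx' : -x ∈ unitSphere n := by
        rw [hmemS] at hx ⊢
        rw [norm_neg]; exact hx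
      have h' : 0 ≤ ⟪u, -x⟫ := by rw [inner_neg_right]; linarith
      have := key (-x) hx' h'
      rwa [heven x] at this
  have hinf : R * Real.exp (-L) ≤ sInf (H '' unitSphere n) := by
    apply le_csInf (hSne.image H)
    rintro b ⟨y, hy, rfl⟩
    exact key2 y hy
  calc sSup (H '' unitSphere n) = R := hRdef.symm
    _ = Real.exp L * (R * Real.exp (-L)) := by
        rw [mul_comm R, ← mul_assoc, ← Real.exp_add]
        simp
    _ ≤ Real.exp L * sInf (H '' unitSphere n) :=
        mul_le_mul_of_nonneg_left hinf (Real.exp_pos L).le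
end
end

section
/- Let n ≥ 1, let k be an integer with 1 ≤ k ≤ n, let p, q ∈ ℝ, and let f : S^n → ℝ be continuous and positive. If H is a strictly convex admissible support function solving Eq(k,p,q,f), then, writing R = sup_{S^n} H and r = inf_{S^n} H, one has R^{q−p} ≥ binom(n,k)^{−1}·min_{S^n} f and r^{q−p} ≤ binom(n,k)^{−1}·max_{S^n} f. -/
open MeasureTheory

noncomputable section

open Filter Topology Polynomial Finset Matrix

namespace MMAux

lemma sdt_max {φ D : ℝ → ℝ} {L : ℝ}
    (hφ : ∀ t, HasDerivAt φ (D t) t)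
    (hD0 : D 0 = 0) (hD : HasDerivAt D L 0)
    (hmax : ∀ t, φ t ≤ φ 0) : L ≤ 0 := by
  by_contra hL
  push_neg at hL
  have hslope : Tendsto (slope D 0) (𝓝[≠] 0) (𝓝 L) := hasDerivAt_iff_tendsto_slope.1 hD
  have h1 : ∀ᶠ t in 𝓝[≠] (0:ℝ), 0 < slope D 0 t := hslope.eventually (eventually_gt_nhds hL)
  have h2 : ∀ᶠ t in 𝓝[>] (0:ℝ), 0 < slope D 0 t :=
    h1.filter_mono (nhdsWithin_mono 0 (fun t ht => ne_of_gt ht))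
  have h3 : ∀ᶠ t in 𝓝[>] (0:ℝ), 0 < D t := by
    filter_upwards [h2, self_mem_nhdsWithin] with t ht ht'
    have ht0 : (0:ℝ) < t := ht'
    have hs : slope D 0 t = D t / t := by simp [slope_def_field, hD0]
    rw [hs] at ht
    rcases div_pos_iff.1 ht with h | h
    · exact h.1
    · exact absurd ht0 (not_lt.2 h.2.le)
  obtain ⟨δ, hδpos, hδ⟩ := (nhdsGT_basis (0:ℝ)).eventually_iff.1 h3
  have hmono : StrictMonoOn φ (Set.Icc 0 (δ/2)) := by
    apply strictMonoOn_of_deriv_pos (convex_Icc _ _)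
    · exact (Differentiable.continuous (fun t => (hφ t).differentiableAt)).continuousOn
    · intro x hx
      rw [interior_Icc] at hx
      rw [(hφ x).deriv]
      exact hδ ⟨hx.1, lt_of_lt_of_le hx.2 (by linarith)⟩
  have h4 : φ 0 < φ (δ/2) :=
    hmono (Set.left_mem_Icc.2 (by linarith)) (Set.right_mem_Icc.2 (by linarith)) (by linarith)
  exact absurd (hmax (δ/2)) (not_le.2 h4)

lemma sdt_min {φ D : ℝ → ℝ} {L : ℝ}
    (hφ : ∀ t, HasDerivAt φ (D t) t)
    (hD0 : D 0 = 0) (hD : HasDerivAt D L 0)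
    (hmin : ∀ t, φ 0 ≤ φ t) : 0 ≤ L := by
  have := sdt_max (φ := fun t => -φ t) (D := fun t => -D t) (L := -L)
    (fun t => (hφ t).neg) (by simp [hD0]) hD.neg (fun t => neg_le_neg (hmin t))
  linarith





lemma charpoly_conj {m : Type*} [Fintype m] [DecidableEq m]
    (U B V : Matrix m m ℝ) (h1 : U * V = 1) :
    (U * B * V).charpoly = B.charpoly := by
  unfold Matrix.charpoly
  have hmapUV : U.map (C : ℝ → ℝ[X]) * V.map (C : ℝ → ℝ[X]) = 1 := by
    rw [← Matrix.map_mul, h1]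
    simp
  have key : Matrix.charmatrix (U * B * V) =
      U.map (C : ℝ → ℝ[X]) * Matrix.charmatrix B * V.map (C : ℝ → ℝ[X]) := by
    unfold Matrix.charmatrix
    rw [Matrix.mul_sub, Matrix.sub_mul]
    congr 1
    · have hc := (Matrix.scalar_commute (n := m) (X : ℝ[X])
        (fun r => (Commute.all (X : ℝ[X]) r)) (U.map (C : ℝ → ℝ[X]))).eq
      rw [← hc, mul_assoc, hmapUV, mul_one]
    · rw [RingHom.mapMatrix_apply, RingHom.mapMatrix_apply, ← Matrix.map_mul, ← Matrix.map_mul]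
  have hmapVU : V.map (C : ℝ → ℝ[X]) * U.map (C : ℝ → ℝ[X]) = 1 :=
    mul_eq_one_comm.mp hmapUV
  rw [key, Matrix.det_mul, Matrix.det_mul]
  rw [mul_comm, ← mul_assoc, ← Matrix.det_mul, hmapVU]
  simp

lemma charpoly_diagonal {m : Type*} [Fintype m] [DecidableEq m] (d : m → ℝ) :
    (Matrix.diagonal d).charpoly = ∏ i, (X - C (d i)) := by
  unfold Matrix.charpoly
  have h : Matrix.charmatrix (Matrix.diagonal d) = Matrix.diagonal (fun i => X - C (d i)) := by
    apply Matrix.ext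
    intro i j
    by_cases hij : i = j
    · subst hij
      simp

    · rw [Matrix.charmatrix_apply_ne _ _ _ hij, Matrix.diagonal_apply_ne _ hij,
        Matrix.diagonal_apply_ne _ hij, map_zero, neg_zero]
  rw [h, Matrix.det_diagonal]

lemma charpoly_eq_prod {m : Type*} [Fintype m] [DecidableEq m]
    (A : Matrix m m ℝ) (hA : A.IsHermitian) :
    A.charpoly = ∏ i, (X - C (hA.eigenvalues i)) := by
  have hsp := hA.spectral_theorem
  set V := (Matrix.IsHermitian.eigenvectorUnitary hA : Matrix m m ℝ) with hV
  have h1 : V * star V = 1 := Matrix.mem_unitaryGroup_iff.mp (Matrix.IsHermitian.eigenvectorUnitary hA).2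
  have hd : (Matrix.diagonal (RCLike.ofReal ∘ hA.eigenvalues) : Matrix m m ℝ)
      = Matrix.diagonal hA.eigenvalues := by
    congr 1
  calc A.charpoly = (V * Matrix.diagonal hA.eigenvalues * star V).charpoly := by
        rw [← hd]; conv_lhs => rw [hsp]
        rfl
    _ = (Matrix.diagonal hA.eigenvalues).charpoly := charpoly_conj _ _ _ h1
    _ = ∏ i, (X - C (hA.eigenvalues i)) := charpoly_diagonal _

lemma esymmMat_eq_sum {n k : ℕ} (hk : k ≤ n + 1) (A : Matrix (Fin (n+1)) (Fin (n+1)) ℝ)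
    (hA : A.IsHermitian) :
    esymmMat n k A = ∑ T ∈ powersetCard k (univ : Finset (Fin (n+1))),
      ∏ i ∈ T, hA.eigenvalues i := by
  unfold esymmMat
  rw [charpoly_eq_prod A hA]
  have h1 : (∏ i, (X - C (hA.eigenvalues i)))
      = (((univ : Finset (Fin (n+1))).val.map hA.eigenvalues).map (fun r => X - C r)).prod := by
    rw [Multiset.map_map]
    rfl
  have hcard : Multiset.card ((univ : Finset (Fin (n+1))).val.map hA.eigenvalues) = n + 1 := by
    simp
  rw [h1, Multiset.prod_X_sub_C_coeff _ (by rw [hcard]; omega)]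
  rw [hcard]
  have h2 : n + 1 - (n + 1 - k) = k := by omega
  rw [h2, Finset.esymm_map_val]
  rw [← mul_assoc, ← mul_pow]
  norm_num

lemma esymm_sum_le {n k : ℕ} (hk1 : 1 ≤ k) (hkn : k ≤ n) {R : ℝ} (hR : 0 ≤ R)
    (μ : Fin (n+1) → ℝ) (i₀ : Fin (n+1)) (h0 : μ i₀ = 0)
    (hmem : ∀ i, i ≠ i₀ → 0 ≤ μ i ∧ μ i ≤ R) :
    ∑ T ∈ powersetCard k (univ : Finset (Fin (n+1))), ∏ i ∈ T, μ i
      ≤ (n.choose k : ℝ) * R ^ k := by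
  have hsub : powersetCard k ((univ : Finset (Fin (n+1))).erase i₀)
      ⊆ powersetCard k univ := Finset.powersetCard_mono (Finset.subset_univ _)
  have hvanish : ∀ T ∈ powersetCard k (univ : Finset (Fin (n+1))),
      T ∉ powersetCard k ((univ : Finset (Fin (n+1))).erase i₀) → ∏ i ∈ T, μ i = 0 := by
    intro T hT hT'
    rcases Finset.mem_powersetCard.1 hT with ⟨hTsub, hTcard⟩
    have : ¬ T ⊆ (univ : Finset (Fin (n+1))).erase i₀ := by
      intro hcon
      exact hT' (Finset.mem_powersetCard.2 ⟨hcon, hTcard⟩)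
    rcases Finset.not_subset.1 this with ⟨x, hxT, hx⟩
    have hxi : x = i₀ := by
      by_contra hne
      exact hx (Finset.mem_erase.2 ⟨hne, Finset.mem_univ x⟩)
    exact Finset.prod_eq_zero (hxi ▸ hxT) h0
  rw [← Finset.sum_subset hsub hvanish]
  have hbound : ∀ T ∈ powersetCard k ((univ : Finset (Fin (n+1))).erase i₀),
      ∏ i ∈ T, μ i ≤ R ^ k := by
    intro T hT
    rcases Finset.mem_powersetCard.1 hT with ⟨hTsub, hTcard⟩
    have h1 : ∏ i ∈ T, μ i ≤ ∏ _i ∈ T, R := by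
      apply Finset.prod_le_prod
      · intro i hi
        exact (hmem i (Finset.ne_of_mem_erase (hTsub hi))).1
      · intro i hi
        exact (hmem i (Finset.ne_of_mem_erase (hTsub hi))).2
    rwa [Finset.prod_const, hTcard] at h1
  calc ∑ T ∈ powersetCard k ((univ : Finset (Fin (n+1))).erase i₀), ∏ i ∈ T, μ i
      ≤ ∑ _T ∈ powersetCard k ((univ : Finset (Fin (n+1))).erase i₀), R ^ k :=
        Finset.sum_le_sum hbound
    _ = (n.choose k : ℝ) * R ^ k := by
        rw [Finset.sum_const, nsmul_eq_mul]
        congr 2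
        rw [Finset.card_powersetCard, Finset.card_erase_of_mem (Finset.mem_univ _)]
        simp

lemma le_esymm_sum {n k : ℕ} (hk1 : 1 ≤ k) (hkn : k ≤ n) {r : ℝ} (hr : 0 ≤ r)
    (μ : Fin (n+1) → ℝ) (i₀ : Fin (n+1)) (h0 : μ i₀ = 0)
    (hmem : ∀ i, i ≠ i₀ → r ≤ μ i) :
    (n.choose k : ℝ) * r ^ k
      ≤ ∑ T ∈ powersetCard k (univ : Finset (Fin (n+1))), ∏ i ∈ T, μ i := by
  have hsub : powersetCard k ((univ : Finset (Fin (n+1))).erase i₀)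
      ⊆ powersetCard k univ := Finset.powersetCard_mono (Finset.subset_univ _)
  have hvanish : ∀ T ∈ powersetCard k (univ : Finset (Fin (n+1))),
      T ∉ powersetCard k ((univ : Finset (Fin (n+1))).erase i₀) → ∏ i ∈ T, μ i = 0 := by
    intro T hT hT'
    rcases Finset.mem_powersetCard.1 hT with ⟨hTsub, hTcard⟩
    have : ¬ T ⊆ (univ : Finset (Fin (n+1))).erase i₀ := by
      intro hcon
      exact hT' (Finset.mem_powersetCard.2 ⟨hcon, hTcard⟩)
    rcases Finset.not_subset.1 this with ⟨x, hxT, hx⟩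
    have hxi : x = i₀ := by
      by_contra hne
      exact hx (Finset.mem_erase.2 ⟨hne, Finset.mem_univ x⟩)
    exact Finset.prod_eq_zero (hxi ▸ hxT) h0
  rw [← Finset.sum_subset hsub hvanish]
  have hbound : ∀ T ∈ powersetCard k ((univ : Finset (Fin (n+1))).erase i₀),
      r ^ k ≤ ∏ i ∈ T, μ i := by
    intro T hT
    rcases Finset.mem_powersetCard.1 hT with ⟨hTsub, hTcard⟩
    have h1 : ∏ _i ∈ T, r ≤ ∏ i ∈ T, μ i := by
      apply Finset.prod_le_prod
      · intro i hi; exact hr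
      · intro i hi
        exact hmem i (Finset.ne_of_mem_erase (hTsub hi))
    rwa [Finset.prod_const, hTcard] at h1
  calc (n.choose k : ℝ) * r ^ k
      = ∑ _T ∈ powersetCard k ((univ : Finset (Fin (n+1))).erase i₀), r ^ k := by
        rw [Finset.sum_const, nsmul_eq_mul]
        congr 2
        rw [Finset.card_powersetCard, Finset.card_erase_of_mem (Finset.mem_univ _)]
        simp
    _ ≤ ∑ T ∈ powersetCard k ((univ : Finset (Fin (n+1))).erase i₀), ∏ i ∈ T, μ i :=
        Finset.sum_le_sum hbound


variable {n : ℕ}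


lemma sum_single (y : Esp n) : ∑ i, y i • EuclideanSpace.single i (1:ℝ) = y := by
  have := (EuclideanSpace.basisFun (Fin (n+1)) ℝ).sum_repr y
  simpa [EuclideanSpace.basisFun_apply, EuclideanSpace.basisFun_repr] using this

lemma inner_eq_sum (u w : Esp n) : (inner ℝ u w : ℝ) = ∑ i, u i * w i := by
  simp [PiLp.inner_apply, RCLike.inner_apply, conj_trivial]
  exact Finset.sum_congr rfl fun i _ => mul_comm _ _

variable {H : Esp n → ℝ}

lemma hsmooth2 (hH : IsAdmissible n H) {x : Esp n} (hx : x ≠ 0) : ContDiffAt ℝ 2 H x :=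
  ((hH.2.2.2 x hx).contDiffAt ((isOpen_compl_singleton).mem_nhds hx)).of_le (WithTop.coe_le_coe.2 le_top)

lemma hdiffAt (hH : IsAdmissible n H) {x : Esp n} (hx : x ≠ 0) : DifferentiableAt ℝ H x :=
  (hsmooth2 hH hx).differentiableAt (by norm_num)

lemma gdiffAt (hH : IsAdmissible n H) {x : Esp n} (hx : x ≠ 0) :
    DifferentiableAt ℝ (fderiv ℝ H) x :=
  ((hsmooth2 hH hx).fderiv_right (m := 1) (by norm_num)).differentiableAt (by norm_num)

lemma euler (hH : IsAdmissible n H) {x : Esp n} (hx : x ≠ 0) : fderiv ℝ H x x = H x := by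
  have hc : HasDerivAt (fun t : ℝ => t • x) x 1 := by
    simpa using (hasDerivAt_id (1:ℝ)).smul_const x
  have h1 : HasDerivAt (fun t : ℝ => H (t • x)) (fderiv ℝ H x x) 1 := by
    have hfd : HasFDerivAt H (fderiv ℝ H x) ((1:ℝ) • x) := by
      rw [one_smul]; exact (hdiffAt hH hx).hasFDerivAt
    have := hfd.comp_hasDerivAt 1 hc
    exact this
  have h2 : HasDerivAt (fun t : ℝ => H (t • x)) (H x) 1 := by
    have hev : (fun t : ℝ => H (t • x)) =ᶠ[𝓝 (1:ℝ)] fun t => t * H x := by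
      filter_upwards [eventually_gt_nhds one_pos] with t ht
      exact hH.2.1 t ht.le x
    exact (hasDerivAt_mul_const (H x)).congr_of_eventuallyEq hev
  exact h1.unique h2

lemma fderiv_pos_hom (hH : IsAdmissible n H) {x : Esp n} (hx : x ≠ 0) {t : ℝ} (ht : 0 < t) :
    fderiv ℝ H (t • x) = fderiv ℝ H x := by
  have htx : t • x ≠ 0 := smul_ne_zero (ne_of_gt ht) hx
  have h1 : HasFDerivAt (fun y : Esp n => H (t • y))
      ((fderiv ℝ H (t • x)).comp (t • ContinuousLinearMap.id ℝ (Esp n))) x := by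
    have hs : HasFDerivAt (fun y : Esp n => t • y) (t • ContinuousLinearMap.id ℝ (Esp n)) x :=
      (hasFDerivAt_id x).const_smul t
    exact ((hdiffAt hH htx).hasFDerivAt).comp x hs
  have h2 : HasFDerivAt (fun y : Esp n => t * H y) (t • fderiv ℝ H x) x :=
    ((hdiffAt hH hx).hasFDerivAt).const_mul t
  have heq : (fun y : Esp n => H (t • y)) = fun y : Esp n => t * H y :=
    funext fun y => hH.2.1 t ht.le y
  rw [heq] at h1
  have h3 := h1.unique h2
  ext w
  have := congrArg (fun (L : Esp n →L[ℝ] ℝ) => L w) h3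
  simp only [ContinuousLinearMap.coe_comp', Function.comp_apply, ContinuousLinearMap.smul_apply,
    ContinuousLinearMap.coe_smul', Pi.smul_apply, ContinuousLinearMap.coe_id', id_eq,
    smul_eq_mul] at this
  rw [_root_.map_smul] at this
  exact mul_left_cancel₀ (ne_of_gt ht) (by simpa using this)

lemma radialB (hH : IsAdmissible n H) {x : Esp n} (hx : x ≠ 0) :
    fderiv ℝ (fderiv ℝ H) x x = 0 := by
  set g := fderiv ℝ H with hg
  have hc : HasDerivAt (fun t : ℝ => t • x) x 1 := by
    simpa using (hasDerivAt_id (1:ℝ)).smul_const x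
  have h1 : HasDerivAt (fun t : ℝ => g (t • x)) (fderiv ℝ g x x) 1 := by
    have hfd : HasFDerivAt g (fderiv ℝ g x) ((1:ℝ) • x) := by
      rw [one_smul]; exact (gdiffAt hH hx).hasFDerivAt
    have := hfd.comp_hasDerivAt 1 hc
    exact this
  have h2 : HasDerivAt (fun t : ℝ => g (t • x)) 0 1 := by
    have hev : (fun t : ℝ => g (t • x)) =ᶠ[𝓝 (1:ℝ)] fun _ => g x := by
      filter_upwards [eventually_gt_nhds one_pos] with t ht
      exact fderiv_pos_hom hH hx ht
    exact (hasDerivAt_const (1:ℝ) (g x)).congr_of_eventuallyEq hev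
  exact h1.unique h2

lemma symmB (hH : IsAdmissible n H) {x : Esp n} (hx : x ≠ 0) (u w : Esp n) :
    fderiv ℝ (fderiv ℝ H) x u w = fderiv ℝ (fderiv ℝ H) x w u :=
  ((hsmooth2 hH hx).isSymmSndFDerivAt (by simp)).eq u w

section Curve
variable (x₀ v : Esp n)

def curveC (t : ℝ) : Esp n := Real.cos t • x₀ + Real.sin t • v

lemma curveC_zero : curveC x₀ v 0 = x₀ := by simp [curveC]

lemma curveC_norm (hx : ‖x₀‖ = 1) (hv : ‖v‖ = 1) (hvx : (inner ℝ v x₀ : ℝ) = 0) (t : ℝ) :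
    ‖curveC x₀ v t‖ = 1 := by
  have hinner : (inner ℝ (curveC x₀ v t) (curveC x₀ v t) : ℝ) = 1 := by
    have h1 : (inner ℝ x₀ v : ℝ) = 0 := by rw [real_inner_comm]; exact hvx
    simp only [curveC, inner_add_add_self, real_inner_smul_left, real_inner_smul_right, h1, hvx,
      real_inner_self_eq_norm_sq, norm_smul, Real.norm_eq_abs, hx, hv]
    nlinarith [Real.sin_sq_add_cos_sq t, sq_abs (Real.sin t), sq_abs (Real.cos t)]
  rw [norm_eq_sqrt_real_inner, hinner, Real.sqrt_one]

lemma hasDerivAt_curveC (t : ℝ) :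
    HasDerivAt (curveC x₀ v) (-Real.sin t • x₀ + Real.cos t • v) t :=
  ((Real.hasDerivAt_cos t).smul_const x₀).add ((Real.hasDerivAt_sin t).smul_const v)

end Curve

section Extremum

variable (hH : IsAdmissible n H) {x₀ : Esp n} (hx : ‖x₀‖ = 1)

lemma ne_zero_of_norm_one {y : Esp n} (hy : ‖y‖ = 1) : y ≠ 0 := by
  intro h; rw [h, norm_zero] at hy; norm_num at hy

include hH hx in
lemma curve_hasDerivAt_phi {v : Esp n} (hv : ‖v‖ = 1) (hvx : (inner ℝ v x₀ : ℝ) = 0) (t : ℝ) :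
    HasDerivAt (fun s => H (curveC x₀ v s))
      (fderiv ℝ H (curveC x₀ v t) (-Real.sin t • x₀ + Real.cos t • v)) t := by
  have hne : curveC x₀ v t ≠ 0 := ne_zero_of_norm_one (curveC_norm x₀ v hx hv hvx t)
  exact ((hdiffAt hH hne).hasFDerivAt).comp_hasDerivAt t (hasDerivAt_curveC x₀ v t)

include hH hx in
lemma curve_hasDerivAt_D {v : Esp n} (hv : ‖v‖ = 1) (hvx : (inner ℝ v x₀ : ℝ) = 0) :
    HasDerivAt (fun t => fderiv ℝ H (curveC x₀ v t) (-Real.sin t • x₀ + Real.cos t • v))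
      (fderiv ℝ (fderiv ℝ H) x₀ v v - H x₀) 0 := by
  have hx0 : x₀ ≠ 0 := ne_zero_of_norm_one hx
  have hF : HasDerivAt (fun t => fderiv ℝ H (curveC x₀ v t)) (fderiv ℝ (fderiv ℝ H) x₀ v) 0 := by
    have hfd : HasFDerivAt (fderiv ℝ H) (fderiv ℝ (fderiv ℝ H) x₀) (curveC x₀ v 0) := by
      rw [curveC_zero]; exact (gdiffAt hH hx0).hasFDerivAt
    have := hfd.comp_hasDerivAt 0 (hasDerivAt_curveC x₀ v 0)
    simp [curveC_zero] at this
    exact this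
  have hu : HasDerivAt (fun t => -Real.sin t • x₀ + Real.cos t • v) (-x₀) 0 := by
    have h1 : HasDerivAt (fun t : ℝ => -Real.sin t • x₀ + Real.cos t • v)
        (-Real.cos 0 • x₀ + -Real.sin 0 • v) 0 :=
      (((Real.hasDerivAt_sin 0).neg).smul_const x₀).add ((Real.hasDerivAt_cos 0).smul_const v)
    simpa using h1
  have := hF.clm_apply hu
  simp only [Real.sin_zero, Real.cos_zero, neg_zero, zero_smul, one_smul, zero_add,
    curveC_zero] at this
  refine this.congr_deriv ?_
  rw [map_neg]
  have : fderiv ℝ H x₀ x₀ = H x₀ := euler hH hx0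
  rw [this]
  ring

include hH hx in
lemma first_order_max (hmax : ∀ y : Esp n, ‖y‖ = 1 → H y ≤ H x₀) :
    ∀ v : Esp n, (inner ℝ v x₀ : ℝ) = 0 → fderiv ℝ H x₀ v = 0 := by
  intro v hvx
  rcases eq_or_ne v 0 with rfl | hv0
  · simp
  · set u : Esp n := ‖v‖⁻¹ • v with hu
    have hnu : ‖u‖ = 1 := by
      rw [hu, norm_smul, norm_inv, norm_norm, inv_mul_cancel₀ (norm_ne_zero_iff.2 hv0)]
    have hux : (inner ℝ u x₀ : ℝ) = 0 := by
      rw [hu, real_inner_smul_left, hvx, mul_zero]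
    have hloc : IsLocalMax (fun s => H (curveC x₀ u s)) 0 := by
      apply Filter.Eventually.of_forall
      intro t
      simp only [curveC_zero]
      exact hmax _ (curveC_norm x₀ u hx hnu hux t)
    have hd := (curve_hasDerivAt_phi hH hx hnu hux 0)
    have := hloc.deriv_eq_zero
    rw [hd.deriv] at this
    simp only [Real.sin_zero, Real.cos_zero, neg_zero, zero_smul, one_smul, zero_add,
      curveC_zero] at this
    -- this : fderiv ℝ H x₀ u = 0
    have : fderiv ℝ H x₀ (‖v‖⁻¹ • v) = 0 := this
    rw [_root_.map_smul] at this
    have hvn : (‖v‖:ℝ)⁻¹ ≠ 0 := inv_ne_zero (norm_ne_zero_iff.2 hv0)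
    simpa [smul_eq_mul, hvn] using this

include hH hx in
lemma first_order_min (hmin : ∀ y : Esp n, ‖y‖ = 1 → H x₀ ≤ H y) :
    ∀ v : Esp n, (inner ℝ v x₀ : ℝ) = 0 → fderiv ℝ H x₀ v = 0 := by
  intro v hvx
  rcases eq_or_ne v 0 with rfl | hv0
  · simp
  · set u : Esp n := ‖v‖⁻¹ • v with hu
    have hnu : ‖u‖ = 1 := by
      rw [hu, norm_smul, norm_inv, norm_norm, inv_mul_cancel₀ (norm_ne_zero_iff.2 hv0)]
    have hux : (inner ℝ u x₀ : ℝ) = 0 := by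
      rw [hu, real_inner_smul_left, hvx, mul_zero]
    have hloc : IsLocalMin (fun s => H (curveC x₀ u s)) 0 := by
      apply Filter.Eventually.of_forall
      intro t
      simp only [curveC_zero]
      exact hmin _ (curveC_norm x₀ u hx hnu hux t)
    have hd := (curve_hasDerivAt_phi hH hx hnu hux 0)
    have := hloc.deriv_eq_zero
    rw [hd.deriv] at this
    simp only [Real.sin_zero, Real.cos_zero, neg_zero, zero_smul, one_smul, zero_add,
      curveC_zero] at this
    have : fderiv ℝ H x₀ (‖v‖⁻¹ • v) = 0 := this
    rw [_root_.map_smul] at this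
    have hvn : (‖v‖:ℝ)⁻¹ ≠ 0 := inv_ne_zero (norm_ne_zero_iff.2 hv0)
    simpa [smul_eq_mul, hvn] using this

include hH hx in
lemma second_order_max (hmax : ∀ y : Esp n, ‖y‖ = 1 → H y ≤ H x₀) :
    ∀ v : Esp n, (inner ℝ v x₀ : ℝ) = 0 →
      fderiv ℝ (fderiv ℝ H) x₀ v v ≤ H x₀ * ‖v‖ ^ 2 := by
  have key : ∀ u : Esp n, ‖u‖ = 1 → (inner ℝ u x₀ : ℝ) = 0 →
      fderiv ℝ (fderiv ℝ H) x₀ u u ≤ H x₀ := by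
    intro u hnu hux
    have hL := sdt_max (φ := fun s => H (curveC x₀ u s))
      (D := fun t => fderiv ℝ H (curveC x₀ u t) (-Real.sin t • x₀ + Real.cos t • u))
      (L := fderiv ℝ (fderiv ℝ H) x₀ u u - H x₀)
      (curve_hasDerivAt_phi hH hx hnu hux)
      (by
        simp only [Real.sin_zero, Real.cos_zero, neg_zero, zero_smul, one_smul, zero_add,
          curveC_zero]
        exact first_order_max hH hx hmax u hux)
      (curve_hasDerivAt_D hH hx hnu hux)
      (fun t => by
        simpa only [curveC_zero] using hmax _ (curveC_norm x₀ u hx hnu hux t))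
    linarith
  intro v hvx
  rcases eq_or_ne v 0 with rfl | hv0
  · simp
  · set u : Esp n := ‖v‖⁻¹ • v with hu
    have hnu : ‖u‖ = 1 := by
      rw [hu, norm_smul, norm_inv, norm_norm, inv_mul_cancel₀ (norm_ne_zero_iff.2 hv0)]
    have hux : (inner ℝ u x₀ : ℝ) = 0 := by
      rw [hu, real_inner_smul_left, hvx, mul_zero]
    have h1 := key u hnu hux
    have h2 : fderiv ℝ (fderiv ℝ H) x₀ u u
        = ‖v‖⁻¹ * (‖v‖⁻¹ * fderiv ℝ (fderiv ℝ H) x₀ v v) := by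
      rw [hu, _root_.map_smul]
      simp [real_inner_smul_left]
    rw [h2] at h1
    have hvpos : (0:ℝ) < ‖v‖ := norm_pos_iff.2 hv0
    rw [inv_mul_le_iff₀ hvpos, inv_mul_le_iff₀ hvpos] at h1
    calc fderiv ℝ (fderiv ℝ H) x₀ v v ≤ ‖v‖ * (‖v‖ * H x₀) := h1
    _ = H x₀ * ‖v‖ ^ 2 := by ring

include hH hx in
lemma second_order_min (hmin : ∀ y : Esp n, ‖y‖ = 1 → H x₀ ≤ H y) :
    ∀ v : Esp n, (inner ℝ v x₀ : ℝ) = 0 →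
      H x₀ * ‖v‖ ^ 2 ≤ fderiv ℝ (fderiv ℝ H) x₀ v v := by
  have key : ∀ u : Esp n, ‖u‖ = 1 → (inner ℝ u x₀ : ℝ) = 0 →
      H x₀ ≤ fderiv ℝ (fderiv ℝ H) x₀ u u := by
    intro u hnu hux
    have hL := sdt_min (φ := fun s => H (curveC x₀ u s))
      (D := fun t => fderiv ℝ H (curveC x₀ u t) (-Real.sin t • x₀ + Real.cos t • u))
      (L := fderiv ℝ (fderiv ℝ H) x₀ u u - H x₀)
      (curve_hasDerivAt_phi hH hx hnu hux)
      (by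
        simp only [Real.sin_zero, Real.cos_zero, neg_zero, zero_smul, one_smul, zero_add,
          curveC_zero]
        exact first_order_min hH hx hmin u hux)
      (curve_hasDerivAt_D hH hx hnu hux)
      (fun t => by
        simpa only [curveC_zero] using hmin _ (curveC_norm x₀ u hx hnu hux t))
    linarith
  intro v hvx
  rcases eq_or_ne v 0 with rfl | hv0
  · simp
  · set u : Esp n := ‖v‖⁻¹ • v with hu
    have hnu : ‖u‖ = 1 := by
      rw [hu, norm_smul, norm_inv, norm_norm, inv_mul_cancel₀ (norm_ne_zero_iff.2 hv0)]
    have hux : (inner ℝ u x₀ : ℝ) = 0 := by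
      rw [hu, real_inner_smul_left, hvx, mul_zero]
    have h1 := key u hnu hux
    have h2 : fderiv ℝ (fderiv ℝ H) x₀ u u
        = ‖v‖⁻¹ * (‖v‖⁻¹ * fderiv ℝ (fderiv ℝ H) x₀ v v) := by
      rw [hu, _root_.map_smul]
      simp [real_inner_smul_left]
    rw [h2] at h1
    have hvpos : (0:ℝ) < ‖v‖ := norm_pos_iff.2 hv0
    rw [le_inv_mul_iff₀ hvpos, le_inv_mul_iff₀ hvpos] at h1
    calc H x₀ * ‖v‖ ^ 2 = ‖v‖ * (‖v‖ * H x₀) := by ring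
    _ ≤ fderiv ℝ (fderiv ℝ H) x₀ v v := h1

include hH hx in
lemma gradient_at_crit
    (hcrit : ∀ v : Esp n, (inner ℝ v x₀ : ℝ) = 0 → fderiv ℝ H x₀ v = 0) :
    ‖gradient H x₀‖ = H x₀ := by
  have hx0 : x₀ ≠ 0 := ne_zero_of_norm_one hx
  have hEuler := euler hH hx0
  have key : ∀ z : Esp n, fderiv ℝ H x₀ z = H x₀ * (inner ℝ x₀ z : ℝ) := by
    intro z
    set w : Esp n := z - (inner ℝ x₀ z : ℝ) • x₀ with hw
    have hwx : (inner ℝ w x₀ : ℝ) = 0 := by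
      rw [hw, inner_sub_left, real_inner_smul_left, real_inner_self_eq_norm_sq, hx]
      rw [real_inner_comm]
      ring
    have hsplit : fderiv ℝ H x₀ z
        = fderiv ℝ H x₀ ((inner ℝ x₀ z : ℝ) • x₀) + fderiv ℝ H x₀ w := by
      rw [← map_add]
      congr 1
      rw [hw]; abel
    rw [hsplit, _root_.map_smul, hcrit w hwx, hEuler, add_zero, smul_eq_mul, mul_comm]
  have hgrad : gradient H x₀ = H x₀ • x₀ := by
    apply ext_inner_right ℝ
    intro z
    have h1 : (inner ℝ (gradient H x₀) z : ℝ) = fderiv ℝ H x₀ z := by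
      rw [gradient]
      exact InnerProductSpace.toDual_symm_apply
    rw [h1, key z, real_inner_smul_left]
  rw [hgrad, norm_smul, hx, Real.norm_eq_abs, mul_one]
  exact abs_of_pos (hH.2.2.1 x₀ (by simpa [unitSphere, mem_sphere_zero_iff_norm] using hx))


end Extremum

section Hess

variable {n : ℕ} {H : Esp n → ℝ} (hH : IsAdmissible n H) {x₀ : Esp n} (hx : ‖x₀‖ = 1)

lemma hess_entry (i j : Fin (n+1)) : hessMatrix n H x₀ i j
    = fderiv ℝ (fderiv ℝ H) x₀ (EuclideanSpace.single i 1) (EuclideanSpace.single j 1) := by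
  show iteratedFDeriv ℝ 2 H x₀ ![EuclideanSpace.single i 1, EuclideanSpace.single j 1] = _
  rw [iteratedFDeriv_two_apply]
  simp

lemma B_single_right (i : Fin (n+1)) (w : Esp n) :
    fderiv ℝ (fderiv ℝ H) x₀ (EuclideanSpace.single i 1) w
      = ∑ j, w j * hessMatrix n H x₀ i j := by
  calc fderiv ℝ (fderiv ℝ H) x₀ (EuclideanSpace.single i 1) w
      = fderiv ℝ (fderiv ℝ H) x₀ (EuclideanSpace.single i 1)
          (∑ j, w j • EuclideanSpace.single j 1) := by rw [sum_single]
    _ = ∑ j, w j * fderiv ℝ (fderiv ℝ H) x₀ (EuclideanSpace.single i 1)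
          (EuclideanSpace.single j 1) := by
        rw [map_sum]
        exact Finset.sum_congr rfl fun j _ => by rw [_root_.map_smul, smul_eq_mul]
    _ = ∑ j, w j * hessMatrix n H x₀ i j := by
        exact Finset.sum_congr rfl fun j _ => by rw [hess_entry]

lemma B_apply (u w : Esp n) :
    fderiv ℝ (fderiv ℝ H) x₀ u w = ∑ i, u i * ∑ j, w j * hessMatrix n H x₀ i j := by
  have h1 : fderiv ℝ (fderiv ℝ H) x₀ u
      = ∑ i, u i • (fderiv ℝ (fderiv ℝ H) x₀ (EuclideanSpace.single i 1)) := by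
    conv_lhs => rw [← sum_single u]
    rw [map_sum]
    exact Finset.sum_congr rfl fun i _ => by rw [_root_.map_smul]
  rw [h1, ContinuousLinearMap.sum_apply]
  exact Finset.sum_congr rfl fun i _ => by
    rw [ContinuousLinearMap.smul_apply, smul_eq_mul, B_single_right]

lemma quad_hsc (v : Esp n) :
    ∑ i, ∑ j, hessMatrix n H x₀ i j * v i * v j = fderiv ℝ (fderiv ℝ H) x₀ v v := by
  rw [B_apply]
  refine Finset.sum_congr rfl fun i _ => ?_
  rw [Finset.mul_sum]
  exact Finset.sum_congr rfl fun j _ => by ring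

lemma dot_mulVec (u w : Esp n) :
    ∑ i, u i * (hessMatrix n H x₀ *ᵥ w) i = fderiv ℝ (fderiv ℝ H) x₀ u w := by
  rw [B_apply]
  refine Finset.sum_congr rfl fun i _ => ?_
  congr 1
  show ∑ j, hessMatrix n H x₀ i j * w j = _
  exact Finset.sum_congr rfl fun j _ => mul_comm _ _

include hH hx in
lemma B_left_x0 (w : Esp n) : fderiv ℝ (fderiv ℝ H) x₀ x₀ w = 0 := by
  rw [radialB hH (ne_zero_of_norm_one hx)]
  rfl

include hH hx in
lemma mulVec_x0 : hessMatrix n H x₀ *ᵥ x₀ = 0 := by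
  funext i
  have h1 : (hessMatrix n H x₀ *ᵥ x₀) i = ∑ j, x₀ j * hessMatrix n H x₀ i j := by
    show ∑ j, hessMatrix n H x₀ i j * x₀ j = _
    exact Finset.sum_congr rfl fun j _ => mul_comm _ _
  rw [h1, ← B_single_right, symmB hH (ne_zero_of_norm_one hx), B_left_x0 hH hx]
  rfl

include hH hx in
lemma hessHerm : (hessMatrix n H x₀).IsHermitian := by
  apply Matrix.ext
  intro i j
  rw [Matrix.conjTranspose_apply, star_trivial, hess_entry, hess_entry,
    symmB hH (ne_zero_of_norm_one hx)]

include hH hx in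
lemma eigen_struct (hA : (hessMatrix n H x₀).IsHermitian)
    (hpos : ∀ v : Esp n, (inner ℝ v x₀ : ℝ) = 0 → v ≠ 0 →
      0 < fderiv ℝ (fderiv ℝ H) x₀ v v) :
    ∃ i₀, hA.eigenvalues i₀ = 0 ∧ ∀ i, i ≠ i₀ →
      0 < hA.eigenvalues i ∧ ∃ w : Esp n, ‖w‖ = 1 ∧ (inner ℝ w x₀ : ℝ) = 0 ∧
        hA.eigenvalues i = fderiv ℝ (fderiv ℝ H) x₀ w w := by
  have hx0 : x₀ ≠ 0 := ne_zero_of_norm_one hx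
  set A := hessMatrix n H x₀ with hAdef
  have hAx0 : A *ᵥ x₀ = 0 := mulVec_x0 hH hx
  have hdet : A.det = 0 := by
    rw [← Matrix.exists_mulVec_eq_zero_iff]
    exact ⟨x₀.ofLp, fun h => hx0 ((WithLp.ofLp_eq_zero 2).1 h), hAx0⟩
  have hprod : ∏ i, hA.eigenvalues i = 0 := by
    have h := hA.det_eq_prod_eigenvalues
    rw [hdet] at h
    exact h.symm
  obtain ⟨i₀, _, h0⟩ := Finset.prod_eq_zero_iff.1 hprod
  -- kernel characterization
  have hker : ∀ w : Esp n, A *ᵥ w = 0 → w = (inner ℝ x₀ w : ℝ) • x₀ := by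
    intro w hw
    set u : Esp n := w - (inner ℝ x₀ w : ℝ) • x₀ with hu
    have hux : (inner ℝ u x₀ : ℝ) = 0 := by
      rw [hu, inner_sub_left, real_inner_smul_left, real_inner_self_eq_norm_sq, hx,
        real_inner_comm]
      ring
    have hAu : A *ᵥ u = 0 := by
      show A *ᵥ (w - (inner ℝ x₀ w : ℝ) • x₀) = 0
      rw [Matrix.mulVec_sub, Matrix.mulVec_smul, hw, hAx0]
      simp
    have hBuu : fderiv ℝ (fderiv ℝ H) x₀ u u = 0 := by
      rw [← dot_mulVec, hAu]
      simp
    by_cases hu0 : u = 0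
    · rw [hu] at hu0
      have := sub_eq_zero.1 hu0
      exact this
    · exact absurd hBuu (ne_of_gt (hpos u hux hu0))
  -- uniqueness of the zero eigenvalue
  have huniq : ∀ i, hA.eigenvalues i = 0 → i = i₀ := by
    intro i hi
    by_contra hne
    have hWi : A *ᵥ (hA.eigenvectorBasis i) = 0 := by
      have h := hA.mulVec_eigenvectorBasis i
      rw [hi, zero_smul] at h
      exact h
    have hWi0 : A *ᵥ (hA.eigenvectorBasis i₀) = 0 := by
      have h := hA.mulVec_eigenvectorBasis i₀
      rw [h0, zero_smul] at h
      exact h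
    have e1 := hker _ hWi
    have e2 := hker _ hWi0
    have horth : (inner ℝ (hA.eigenvectorBasis i) (hA.eigenvectorBasis i₀) : ℝ) = 0 :=
      hA.eigenvectorBasis.orthonormal.2 hne
    have hn1 : ‖hA.eigenvectorBasis i‖ = 1 := hA.eigenvectorBasis.orthonormal.1 i
    have hn2 : ‖hA.eigenvectorBasis i₀‖ = 1 := hA.eigenvectorBasis.orthonormal.1 i₀
    rw [e1, e2, real_inner_smul_left, real_inner_smul_right, real_inner_self_eq_norm_sq, hx] at horth
    have ha1 : (inner ℝ x₀ (hA.eigenvectorBasis i) : ℝ) ≠ 0 := by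
      intro hzero
      rw [hzero, zero_smul] at e1
      have := hn1
      rw [e1, norm_zero] at this
      norm_num at this
    have ha2 : (inner ℝ x₀ (hA.eigenvectorBasis i₀) : ℝ) ≠ 0 := by
      intro hzero
      rw [hzero, zero_smul] at e2
      have := hn2
      rw [e2, norm_zero] at this
      norm_num at this
    have : (inner ℝ x₀ (hA.eigenvectorBasis i) : ℝ) * ((inner ℝ x₀ (hA.eigenvectorBasis i₀) : ℝ) * 1 ^ 2) ≠ 0 := by
      apply mul_ne_zero ha1
      apply mul_ne_zero ha2
      norm_num
    exact this horth
  refine ⟨i₀, h0, fun i hne => ?_⟩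
  have hμne : hA.eigenvalues i ≠ 0 := fun h => hne (huniq i h)
  set w : Esp n := hA.eigenvectorBasis i with hw
  have hWnorm : ‖w‖ = 1 := hA.eigenvectorBasis.orthonormal.1 i
  have hWne : w ≠ 0 := ne_zero_of_norm_one hWnorm
  have hWeig : A *ᵥ w = hA.eigenvalues i • w := hA.mulVec_eigenvectorBasis i
  -- x₀ ⊥ w
  have hinner : (inner ℝ x₀ w : ℝ) = 0 := by
    have h1 : ∑ j, x₀ j * (A *ᵥ w) j = 0 := by
      rw [dot_mulVec, B_left_x0 hH hx]
    rw [hWeig] at h1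
    have h2 : ∑ j, x₀ j * (hA.eigenvalues i • w) j = hA.eigenvalues i * ∑ j, x₀ j * w j := by
      rw [Finset.mul_sum]
      exact Finset.sum_congr rfl fun j _ => by
        show x₀ j * (hA.eigenvalues i * w j) = _
        ring
    rw [← WithLp.ofLp_smul, h2] at h1
    have h3 : ∑ j, x₀ j * w j = 0 := by
      rcases mul_eq_zero.1 h1 with h | h
      · exact absurd h hμne
      · exact h
    rw [inner_eq_sum]
    exact h3
  have hBww : fderiv ℝ (fderiv ℝ H) x₀ w w = hA.eigenvalues i := by
    rw [← dot_mulVec, hWeig]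
    have h2 : ∑ j, w j * (hA.eigenvalues i • w) j = hA.eigenvalues i * ∑ j, w j * w j := by
      rw [Finset.mul_sum]
      exact Finset.sum_congr rfl fun j _ => by
        show w j * (hA.eigenvalues i * w j) = _
        ring
    rw [← WithLp.ofLp_smul, h2, ← inner_eq_sum, real_inner_self_eq_norm_sq, hWnorm]
    ring
  have hwx : (inner ℝ w x₀ : ℝ) = 0 := by rw [real_inner_comm]; exact hinner
  exact ⟨by rw [← hBww]; exact hpos w hwx hWne, w, hWnorm, hwx, hBww.symm⟩

end Hess

section Key

variable {n k : ℕ} {H : Esp n → ℝ}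

lemma mem_unitSphere {y : Esp n} : y ∈ unitSphere n ↔ ‖y‖ = 1 := by
  show y ∈ Metric.sphere (0 : Esp n) 1 ↔ _
  exact mem_sphere_zero_iff_norm

lemma key_max (hk1 : 1 ≤ k) (hkn : k ≤ n) (hH : IsAdmissible n H)
    (hsc : IsStrictlyConvexSupp n H) {x₀ : Esp n} (hx : ‖x₀‖ = 1)
    (hmax : ∀ y : Esp n, ‖y‖ = 1 → H y ≤ H x₀) :
    esymmMat n k (hessMatrix n H x₀) ≤ (n.choose k : ℝ) * (H x₀) ^ k := by
  have hmem : x₀ ∈ unitSphere n := mem_unitSphere.2 hx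
  have hHpos : 0 < H x₀ := hH.2.2.1 x₀ hmem
  have hA := hessHerm hH hx
  have hpos : ∀ v : Esp n, (inner ℝ v x₀ : ℝ) = 0 → v ≠ 0 →
      0 < fderiv ℝ (fderiv ℝ H) x₀ v v := by
    intro v hv hv0
    have := hsc x₀ hmem v hv hv0
    rwa [quad_hsc] at this
  obtain ⟨i₀, h0, hrest⟩ := eigen_struct hH hx hA hpos
  rw [esymmMat_eq_sum (by omega) _ hA]
  apply esymm_sum_le hk1 hkn hHpos.le hA.eigenvalues i₀ h0
  intro i hne
  obtain ⟨hp, w, hw1, hwx, heq⟩ := hrest i hne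
  refine ⟨hp.le, ?_⟩
  rw [heq]
  have h2 := second_order_max hH hx hmax w hwx
  rw [hw1] at h2
  simpa using h2

lemma key_min (hk1 : 1 ≤ k) (hkn : k ≤ n) (hH : IsAdmissible n H)
    (hsc : IsStrictlyConvexSupp n H) {x₁ : Esp n} (hx : ‖x₁‖ = 1)
    (hmin : ∀ y : Esp n, ‖y‖ = 1 → H x₁ ≤ H y) :
    (n.choose k : ℝ) * (H x₁) ^ k ≤ esymmMat n k (hessMatrix n H x₁) := by
  have hmem : x₁ ∈ unitSphere n := mem_unitSphere.2 hx
  have hHpos : 0 < H x₁ := hH.2.2.1 x₁ hmem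
  have hA := hessHerm hH hx
  have hpos : ∀ v : Esp n, (inner ℝ v x₁ : ℝ) = 0 → v ≠ 0 →
      0 < fderiv ℝ (fderiv ℝ H) x₁ v v := by
    intro v hv hv0
    have := hsc x₁ hmem v hv hv0
    rwa [quad_hsc] at this
  obtain ⟨i₀, h0, hrest⟩ := eigen_struct hH hx hA hpos
  rw [esymmMat_eq_sum (by omega) _ hA]
  apply le_esymm_sum hk1 hkn hHpos.le hA.eigenvalues i₀ h0
  intro i hne
  obtain ⟨hp, w, hw1, hwx, heq⟩ := hrest i hne
  rw [heq]
  have h2 := second_order_min hH hx hmin w hwx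
  rw [hw1] at h2
  simpa using h2

end Key

end MMAux

/-- **Inequalities (3.9).** If `H` solves `Eq(k,p,q,f)`, then with `R = max h` and
`r = min h` one has `R^(q-p) ≥ binom(n,k)⁻¹·min f` and `r^(q-p) ≤ binom(n,k)⁻¹·max f`. -/
theorem maxmin_support_bounds
    (n k : ℕ) (hn : 1 ≤ n) (hk1 : 1 ≤ k) (hkn : k ≤ n) (p q : ℝ)
    (f : Esp n → ℝ)
    (hfc : ContinuousOn f (unitSphere n))
    (hfpos : ∀ x ∈ unitSphere n, 0 < f x)
    (H : Esp n → ℝ) (hH : IsAdmissible n H) (hsc : IsStrictlyConvexSupp n H)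
    (hsol : SolvesEq n k p q f H) :
    ((n.choose k : ℝ))⁻¹ * sInf (f '' unitSphere n) ≤
        sSup (H '' unitSphere n) ^ (q - p) ∧
      sInf (H '' unitSphere n) ^ (q - p) ≤
        ((n.choose k : ℝ))⁻¹ * sSup (f '' unitSphere n) := by
  classical
  have hC : (0:ℝ) < (n.choose k : ℝ) := by
    exact_mod_cast Nat.choose_pos hkn
  have hcompact : IsCompact (unitSphere n) := isCompact_sphere 0 1
  have hne : (unitSphere n).Nonempty := NormedSpace.sphere_nonempty.2 zero_le_one
  have hcont : ContinuousOn H (unitSphere n) := by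
    apply (hH.2.2.2.continuousOn).mono
    intro y hy
    exact MMAux.ne_zero_of_norm_one (MMAux.mem_unitSphere.1 hy)
  obtain ⟨x₀, hx₀m, hx₀max⟩ := hcompact.exists_isMaxOn hne hcont
  obtain ⟨x₁, hx₁m, hx₁min⟩ := hcompact.exists_isMinOn hne hcont
  have hx₀ : ‖x₀‖ = 1 := MMAux.mem_unitSphere.1 hx₀m
  have hx₁ : ‖x₁‖ = 1 := MMAux.mem_unitSphere.1 hx₁m
  have hRpos : 0 < H x₀ := hH.2.2.1 x₀ hx₀m
  have hrpos : 0 < H x₁ := hH.2.2.1 x₁ hx₁m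
  have hmax' : ∀ y : Esp n, ‖y‖ = 1 → H y ≤ H x₀ := fun y hy =>
    hx₀max (MMAux.mem_unitSphere.2 hy)
  have hmin' : ∀ y : Esp n, ‖y‖ = 1 → H x₁ ≤ H y := fun y hy =>
    hx₁min (MMAux.mem_unitSphere.2 hy)
  have hRs : sSup (H '' unitSphere n) = H x₀ :=
    IsGreatest.csSup_eq ⟨⟨x₀, hx₀m, rfl⟩, by
      rintro _ ⟨y, hy, rfl⟩
      exact hmax' y (MMAux.mem_unitSphere.1 hy)⟩
  have hrs : sInf (H '' unitSphere n) = H x₁ :=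
    IsLeast.csInf_eq ⟨⟨x₁, hx₁m, rfl⟩, by
      rintro _ ⟨y, hy, rfl⟩
      exact hmin' y (MMAux.mem_unitSphere.1 hy)⟩
  set R := H x₀ with hRdef
  set r := H x₁ with hrdef
  have hgrad₀ : ‖gradient H x₀‖ = R :=
    MMAux.gradient_at_crit hH hx₀ (MMAux.first_order_max hH hx₀ hmax')
  have hgrad₁ : ‖gradient H x₁‖ = r :=
    MMAux.gradient_at_crit hH hx₁ (MMAux.first_order_min hH hx₁ hmin')
  have heq₀ := hsol x₀ hx₀m
  have heq₁ := hsol x₁ hx₁m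
  rw [hgrad₀] at heq₀
  rw [hgrad₁] at heq₁
  have hkey₀ := MMAux.key_max hk1 hkn hH hsc hx₀ hmax'
  have hkey₁ := MMAux.key_min hk1 hkn hH hsc hx₁ hmin'
  rw [heq₀] at hkey₀
  rw [heq₁] at hkey₁
  -- hkey₀ : f x₀ * R ^ (p - 1) * R ^ ((k:ℝ) + 1 - q) ≤ (n.choose k) * R ^ k
  -- hkey₁ : (n.choose k) * r ^ k ≤ f x₁ * r ^ (p - 1) * r ^ ((k:ℝ) + 1 - q)
  have hfx₀ : f x₀ ≤ (n.choose k : ℝ) * R ^ (q - p) := by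
    have hmul := mul_le_mul_of_nonneg_right hkey₀
      (le_of_lt (Real.rpow_pos_of_pos hRpos (q - p - (k:ℝ))))
    have hL : f x₀ * R ^ (p - 1) * R ^ ((k:ℝ) + 1 - q) * R ^ (q - p - (k:ℝ)) = f x₀ := by
      rw [mul_assoc, mul_assoc, ← Real.rpow_add hRpos, ← Real.rpow_add hRpos]
      have he : (p - 1) + (((k:ℝ) + 1 - q) + (q - p - (k:ℝ))) = 0 := by ring
      rw [he, Real.rpow_zero, mul_one]
    have hRr : (n.choose k : ℝ) * R ^ k * R ^ (q - p - (k:ℝ))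
        = (n.choose k : ℝ) * R ^ (q - p) := by
      rw [mul_assoc, ← Real.rpow_natCast R k, ← Real.rpow_add hRpos]
      have he : (k:ℝ) + (q - p - (k:ℝ)) = q - p := by ring
      rw [he]
    rw [hL, hRr] at hmul
    exact hmul
  have hfx₁ : (n.choose k : ℝ) * r ^ (q - p) ≤ f x₁ := by
    have hmul := mul_le_mul_of_nonneg_right hkey₁
      (le_of_lt (Real.rpow_pos_of_pos hrpos (q - p - (k:ℝ))))
    have hL : f x₁ * r ^ (p - 1) * r ^ ((k:ℝ) + 1 - q) * r ^ (q - p - (k:ℝ)) = f x₁ := by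
      rw [mul_assoc, mul_assoc, ← Real.rpow_add hrpos, ← Real.rpow_add hrpos]
      have he : (p - 1) + (((k:ℝ) + 1 - q) + (q - p - (k:ℝ))) = 0 := by ring
      rw [he, Real.rpow_zero, mul_one]
    have hRr : (n.choose k : ℝ) * r ^ k * r ^ (q - p - (k:ℝ))
        = (n.choose k : ℝ) * r ^ (q - p) := by
      rw [mul_assoc, ← Real.rpow_natCast r k, ← Real.rpow_add hrpos]
      have he : (k:ℝ) + (q - p - (k:ℝ)) = q - p := by ring
      rw [he]
    rw [hL, hRr] at hmul
    exact hmul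
  have hbddB : BddBelow (f '' unitSphere n) :=
    (hcompact.image_of_continuousOn hfc).bddBelow
  have hbddA : BddAbove (f '' unitSphere n) :=
    (hcompact.image_of_continuousOn hfc).bddAbove
  constructor
  · rw [hRs]
    have h1 : sInf (f '' unitSphere n) ≤ f x₀ := csInf_le hbddB ⟨x₀, hx₀m, rfl⟩
    calc (n.choose k : ℝ)⁻¹ * sInf (f '' unitSphere n)
        ≤ (n.choose k : ℝ)⁻¹ * f x₀ :=
          mul_le_mul_of_nonneg_left h1 (inv_nonneg.2 hC.le)
      _ ≤ (n.choose k : ℝ)⁻¹ * ((n.choose k : ℝ) * R ^ (q - p)) :=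
          mul_le_mul_of_nonneg_left hfx₀ (inv_nonneg.2 hC.le)
      _ = R ^ (q - p) := by
          rw [← mul_assoc, inv_mul_cancel₀ (ne_of_gt hC), one_mul]
  · rw [hrs]
    have h1 : f x₁ ≤ sSup (f '' unitSphere n) := le_csSup hbddA ⟨x₁, hx₁m, rfl⟩
    calc r ^ (q - p)
        = (n.choose k : ℝ)⁻¹ * ((n.choose k : ℝ) * r ^ (q - p)) := by
          rw [← mul_assoc, inv_mul_cancel₀ (ne_of_gt hC), one_mul]
      _ ≤ (n.choose k : ℝ)⁻¹ * f x₁ :=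
          mul_le_mul_of_nonneg_left hfx₁ (inv_nonneg.2 hC.le)
      _ ≤ (n.choose k : ℝ)⁻¹ * sSup (f '' unitSphere n) :=
          mul_le_mul_of_nonneg_left h1 (inv_nonneg.2 hC.le)
end
end

section
/- Let n ≥ 1 and let k be an integer with 1 ≤ k ≤ n. There exists a constant c > 0, depending only on n and k, such that for all real numbers λ_1 ≥ λ_2 ≥ ⋯ ≥ λ_n ≥ 0 one has λ_1·σ_{k−1}(λ_2, …, λ_n) ≥ c·σ_k(λ_1, …, λ_n). -/
noncomputable section

/-- The `j`-th elementary symmetric polynomial of `lam` over the index set `s`. -/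
def esymmOn {n : ℕ} (s : Finset (Fin n)) (j : ℕ) (lam : Fin n → ℝ) : ℝ :=
  ∑ t ∈ Finset.powersetCard j s, ∏ i ∈ t, lam i

private lemma fin_orderEmb_le {k n : ℕ} (e : Fin k ↪o Fin n) :
    ∀ jv : ℕ, ∀ hj : jv < k, jv ≤ (e ⟨jv, hj⟩ : ℕ) := by
  intro jv
  induction jv with
  | zero => intro _; exact Nat.zero_le _
  | succ m ih =>
    intro hj
    have hm' : m < k := by omega
    have h1 := ih hm'
    have h2 : e ⟨m, hm'⟩ < e ⟨m + 1, hj⟩ := e.strictMono (by simp [Fin.lt_def])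
    rw [Fin.lt_def] at h2
    omega

/-- **Inequality (3.48).** There is `c > 0`, depending only on `n` and `k`, such that
for all `λ₁ ≥ λ₂ ≥ ⋯ ≥ λₙ ≥ 0` one has `λ₁·σ_{k-1}(λ|1) ≥ c·σ_k(λ)`. -/
theorem largest_eigenvalue_times_esymm
    (n k : ℕ) (hn : 0 < n) (hk1 : 1 ≤ k) (hkn : k ≤ n) :
    ∃ c : ℝ, 0 < c ∧
      ∀ lam : Fin n → ℝ,
        (∀ i j : Fin n, i ≤ j → lam j ≤ lam i) →
        (∀ i : Fin n, 0 ≤ lam i) →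
        c * esymmOn Finset.univ k lam ≤
          lam ⟨0, hn⟩ * esymmOn (Finset.univ.erase ⟨0, hn⟩) (k - 1) lam := by
  have hchoose : (0 : ℝ) < (n.choose k : ℝ) := by
    exact_mod_cast Nat.choose_pos hkn
  refine ⟨(n.choose k : ℝ)⁻¹, inv_pos.mpr hchoose, ?_⟩
  intro lam hmono hpos
  -- the set of the first k indices
  set S : Finset (Fin n) := Finset.univ.map (Fin.castLEEmb hkn) with hS
  have hScard : S.card = k := by simp [hS]
  have h0S : (⟨0, hn⟩ : Fin n) ∈ S := by
    refine Finset.mem_map.mpr ⟨⟨0, hk1⟩, Finset.mem_univ _, ?_⟩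
    rfl
  set P : ℝ := ∏ i ∈ S, lam i with hP
  have hPnn : 0 ≤ P := Finset.prod_nonneg fun i _ => hpos i
  -- any k-subset product is ≤ P
  have hkey : ∀ t ∈ Finset.powersetCard k (Finset.univ : Finset (Fin n)),
      ∏ i ∈ t, lam i ≤ P := by
    intro t ht
    have htc : t.card = k := (Finset.mem_powersetCard.mp ht).2
    set e := t.orderEmbOfFin htc with he
    have himg : Finset.image (fun j => e j) Finset.univ = t := by
      apply Finset.coe_injective
      rw [Finset.coe_image, Finset.coe_univ, Set.image_univ]
      exact t.range_orderEmbOfFin htc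
    have h1 : ∏ i ∈ t, lam i = ∏ j : Fin k, lam (e j) := by
      rw [← himg, Finset.prod_image]
      intro a _ b _ hab
      exact e.injective hab
    have h2 : P = ∏ j : Fin k, lam (Fin.castLE hkn j) := by
      rw [hP, hS, Finset.prod_map]
      rfl
    rw [h1, h2]
    apply Finset.prod_le_prod (fun j _ => hpos _)
    intro j _
    apply hmono
    have h3 := fin_orderEmb_le e j.val j.isLt
    simp only [Fin.eta] at h3
    exact Fin.le_def.mpr h3
  have hsum : esymmOn Finset.univ k lam ≤ (n.choose k : ℝ) * P := by
    have := Finset.sum_le_card_nsmul (Finset.powersetCard k (Finset.univ : Finset (Fin n)))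
      (fun t => ∏ i ∈ t, lam i) P hkey
    rw [Finset.card_powersetCard, Finset.card_univ, Fintype.card_fin] at this
    simpa [esymmOn, nsmul_eq_mul] using this
  -- P = lam 0 * prod over T, with T a (k-1)-subset of erase 0
  set T : Finset (Fin n) := S.erase ⟨0, hn⟩ with hT
  have hPT : P = lam ⟨0, hn⟩ * ∏ i ∈ T, lam i := (Finset.mul_prod_erase S lam h0S).symm
  have hTmem : T ∈ Finset.powersetCard (k - 1) (Finset.univ.erase ⟨0, hn⟩) := by
    refine Finset.mem_powersetCard.mpr ⟨?_, ?_⟩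
    · exact Finset.erase_subset_erase _ (Finset.subset_univ S)
    · rw [hT, Finset.card_erase_of_mem h0S, hScard]
  have hRHS : lam ⟨0, hn⟩ * ∏ i ∈ T, lam i ≤
      lam ⟨0, hn⟩ * esymmOn (Finset.univ.erase ⟨0, hn⟩) (k - 1) lam := by
    apply mul_le_mul_of_nonneg_left _ (hpos _)
    exact Finset.single_le_sum (f := fun t => ∏ i ∈ t, lam i)
      (fun t _ => Finset.prod_nonneg fun i _ => hpos i) hTmem
  calc (n.choose k : ℝ)⁻¹ * esymmOn Finset.univ k lam
      ≤ (n.choose k : ℝ)⁻¹ * ((n.choose k : ℝ) * P) := by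
        exact mul_le_mul_of_nonneg_left hsum (inv_nonneg.mpr hchoose.le)
    _ = P := by field_simp
    _ = lam ⟨0, hn⟩ * ∏ i ∈ T, lam i := hPT
    _ ≤ _ := hRHS
end
end

section
/- (Newton–Maclaurin inequality) Let n ≥ 1 and let k, l be integers with 1 ≤ l ≤ k ≤ n. For every λ = (λ_1, …, λ_n) ∈ ℝ^n lying in the cone Γ_k (i.e., σ_i(λ) > 0 for all 1 ≤ i ≤ k), one has (σ_k(λ)/binom(n,k))^{1/k} ≤ (σ_l(λ)/binom(n,l))^{1/l}. -/
noncomputable section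

/-- The `j`-th elementary symmetric polynomial in the `n` variables `lam 1, …, lam n`. -/
def esymmFin (n j : ℕ) (lam : Fin n → ℝ) : ℝ :=
  ∑ t ∈ Finset.powersetCard j (Finset.univ : Finset (Fin n)), ∏ i ∈ t, lam i

open Finset Polynomial

lemma esymmFin_eq (n j : ℕ) (lam : Fin n → ℝ) :
    esymmFin n j lam = (Multiset.map lam Finset.univ.val).esymm j := by
  rw [esymmFin, Finset.esymm_map_val]

lemma esymmFin_zero (n : ℕ) (lam : Fin n → ℝ) : esymmFin n 0 lam = 1 := by
  simp [esymmFin]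

lemma sq_sum_pairs {ι : Type*} [DecidableEq ι] (s : Finset ι) (f : ι → ℝ) :
    (∑ i ∈ s, f i) ^ 2
      = (∑ i ∈ s, f i ^ 2) + 2 * ∑ t ∈ s.powersetCard 2, ∏ i ∈ t, f i := by
  induction s using Finset.cons_induction with
  | empty =>
    rw [show (Finset.powersetCard 2 (∅:Finset ι)) = ∅ from Finset.powersetCard_eq_empty.2 (by simp)]
    simp
  | cons a s ha ih =>
    rw [Finset.sum_cons, Finset.sum_cons, Finset.cons_eq_insert,
      Finset.powersetCard_succ_insert ha]
    rw [Finset.sum_union ?hdisj]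
    case hdisj =>
      rw [Finset.disjoint_left]
      intro t ht ht'
      obtain ⟨u, hu, rfl⟩ := Finset.mem_image.1 ht'
      have hts := (Finset.mem_powersetCard.1 ht).1
      exact ha (hts (Finset.mem_insert_self a u))
    rw [Finset.sum_image ?hinj]
    case hinj =>
      intro t ht u hu h
      have hts := (Finset.mem_powersetCard.1 ht).1
      have hus := (Finset.mem_powersetCard.1 hu).1
      have hat : a ∉ t := fun h' => ha (hts h')
      have hau : a ∉ u := fun h' => ha (hus h')
      rw [← Finset.erase_insert hat, ← Finset.erase_insert hau, h]
    have hstep : ∑ t ∈ s.powersetCard 1, ∏ i ∈ insert a t, f i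
        = f a * ∑ i ∈ s, f i := by
      rw [Finset.powersetCard_one, Finset.sum_map, Finset.mul_sum]
      refine Finset.sum_congr rfl fun i hi => ?_
      have hai : a ∉ ({i} : Finset ι) := by
        simp only [Finset.mem_singleton]
        rintro rfl; exact ha hi
      simp [Finset.prod_insert hai]
    rw [hstep]
    linear_combination ih

lemma sum_powersetCard_compl {n j : ℕ} (hj : j ≤ n) (f : Finset (Fin n) → ℝ) :
    ∑ t ∈ Finset.powersetCard j (Finset.univ : Finset (Fin n)), f tᶜ
      = ∑ t ∈ Finset.powersetCard (n - j) (Finset.univ : Finset (Fin n)), f t := by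
  refine Finset.sum_nbij' (fun t => tᶜ) (fun t => tᶜ) ?_ ?_ ?_ ?_ ?_
  · intro t ht
    rw [Finset.mem_powersetCard_univ] at ht ⊢
    rw [Finset.card_compl, ht, Fintype.card_fin]
  · intro t ht
    rw [Finset.mem_powersetCard_univ] at ht ⊢
    rw [Finset.card_compl, ht, Fintype.card_fin]
    omega
  · intro t _; exact compl_compl t
  · intro t _; exact compl_compl t
  · intro t _; rfl

lemma exists_tuple (s : Multiset ℝ) :
    ∃ g : Fin (Multiset.card s) → ℝ, Multiset.map g Finset.univ.val = s := by
  refine ⟨fun i => s.toList.get (Fin.cast s.length_toList.symm i), ?_⟩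
  have : (Finset.univ.val : Multiset (Fin (Multiset.card s))).map
      (fun i => s.toList.get (Fin.cast s.length_toList.symm i))
      = ((List.ofFn fun i => s.toList.get (Fin.cast s.length_toList.symm i)) : Multiset ℝ) := by
    rw [Fin.univ_val_map]
  rw [this]
  conv_rhs => rw [← s.coe_toList]
  congr 1
  apply List.ext_get
  · simp
  · intro i h1 h2
    simp [List.get_ofFn]

lemma prod_compl_pair {n : ℕ} (lam : Fin n → ℝ) {t : Finset (Fin n)}
    (ht : t.card = 2) :
    (∏ i ∈ tᶜ, lam i) * ∏ i, lam i
      = ∏ i ∈ t, ∏ j ∈ Finset.univ.erase i, lam j := by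
  obtain ⟨a, b, hab, rfl⟩ := Finset.card_eq_two.1 ht
  rw [Finset.prod_pair hab]
  have hc : ({a, b} : Finset (Fin n))ᶜ = (Finset.univ.erase a).erase b := by
    ext x
    simp only [Finset.mem_compl, Finset.mem_insert, Finset.mem_singleton, Finset.mem_erase,
      Finset.mem_univ, and_true, not_or]
    tauto
  rw [hc]
  have h1 : (∏ i, lam i) = lam a * ∏ i ∈ Finset.univ.erase a, lam i :=
    (Finset.mul_prod_erase _ _ (Finset.mem_univ a)).symm
  have h2 : (∏ i ∈ Finset.univ.erase a, lam i)
      = lam b * ∏ i ∈ (Finset.univ.erase a).erase b, lam i :=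
    (Finset.mul_prod_erase _ _ (by simp [Finset.mem_erase, hab.symm])).symm
  have h3 : (∏ i ∈ Finset.univ.erase b, lam i)
      = lam a * ∏ i ∈ (Finset.univ.erase b).erase a, lam i :=
    (Finset.mul_prod_erase _ _ (by simp [Finset.mem_erase, hab])).symm
  have h4 : (Finset.univ.erase b).erase a = (Finset.univ.erase a).erase b := by
    ext x
    simp only [Finset.mem_erase, Finset.mem_univ, and_true]
    tauto
  rw [h1, h2, h3, h4]
  ring

lemma newton_top (k : ℕ) (lam : Fin (k + 2) → ℝ) :
    esymmFin (k+2) k lam * esymmFin (k+2) (k+2) lam * ((k+2).choose (k+1) : ℝ) ^ 2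
      ≤ (esymmFin (k+2) (k+1) lam) ^ 2 * ((k+2).choose k : ℝ) * ((k+2).choose (k+2) : ℝ) := by
  set P : Fin (k+2) → ℝ := fun i => ∏ j ∈ Finset.univ.erase i, lam j with hP
  have hcardu : (Finset.univ : Finset (Fin (k+2))).card = k + 2 := by simp
  have hE1 : esymmFin (k+2) (k+1) lam = ∑ i, P i := by
    have h := sum_powersetCard_compl (n := k+2) (j := 1)
      (by omega) (fun t => ∏ i ∈ t, lam i)
    simp only [esymmFin]
    rw [show k + 2 - 1 = k + 1 by omega] at h
    rw [← h, Finset.powersetCard_one, Finset.sum_map]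
    refine Finset.sum_congr rfl fun i _ => ?_
    have hci : ({i} : Finset (Fin (k+2)))ᶜ = Finset.univ.erase i := by
      ext x; simp [Finset.mem_erase, eq_comm]
    simp only [Function.Embedding.coeFn_mk, hci, hP]
  have hE2 : esymmFin (k+2) k lam * esymmFin (k+2) (k+2) lam
      = ∑ t ∈ Finset.powersetCard 2 (Finset.univ : Finset (Fin (k+2))), ∏ i ∈ t, P i := by
    have hps : Finset.powersetCard (k+2) (Finset.univ : Finset (Fin (k+2)))
        = {Finset.univ} := by
      simpa using Finset.powersetCard_self (Finset.univ : Finset (Fin (k+2)))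
    have hnn : esymmFin (k+2) (k+2) lam = ∏ i, lam i := by
      simp only [esymmFin]
      rw [hps, Finset.sum_singleton]
    have hk2 : esymmFin (k+2) k lam
        = ∑ t ∈ Finset.powersetCard 2 (Finset.univ : Finset (Fin (k+2))), ∏ i ∈ tᶜ, lam i := by
      have h := sum_powersetCard_compl (n := k+2) (j := 2)
        (by omega) (fun t => ∏ i ∈ t, lam i)
      rw [show k + 2 - 2 = k by omega] at h
      simp only [esymmFin]
      exact h.symm
    rw [hnn, hk2, Finset.sum_mul]
    refine Finset.sum_congr rfl fun t ht => ?_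
    exact prod_compl_pair lam (Finset.mem_powersetCard_univ.1 ht)
  have hc1 : (((k+2).choose (k+1)) : ℝ) = ((k:ℝ) + 2) := by
    have h : (k + 2).choose (k + 1) = k + 2 := by
      simpa using Nat.choose_succ_self_right (k + 1)
    rw [h]; push_cast; ring
  have hc2 : (k+2).choose (k+2) = 1 := Nat.choose_self _
  have hc3 : 2 * (((k+2).choose k) : ℝ) = ((k:ℝ) + 2) * ((k:ℝ) + 1) := by
    have hsymm : (k+2).choose k = (k+2).choose 2 := by
      rw [← Nat.choose_symm (show k ≤ k + 2 by omega), show k + 2 - k = 2 by omega]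
    have h := Nat.add_one_mul_choose_eq (k + 1) 1
    simp only [Nat.choose_one_right, Nat.succ_eq_add_one] at h
    have hcast := congrArg (Nat.cast (R := ℝ)) h
    push_cast at hcast
    rw [hsymm]
    push_cast
    linarith [hcast]
  have hcs := sq_sum_pairs (Finset.univ : Finset (Fin (k+2))) P
  have hcheb : (∑ i, P i) ^ 2 ≤ ((k:ℝ) + 2) * ∑ i, P i ^ 2 := by
    have h := sq_sum_le_card_mul_sum_sq (s := (Finset.univ : Finset (Fin (k+2)))) (f := P)
    rw [hcardu] at h
    push_cast at h
    exact h
  rw [hE1, hE2, hc1, hc2]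
  push_cast
  set T := ∑ i, P i
  set S1 := ∑ i, P i ^ 2
  set S2 := ∑ t ∈ Finset.powersetCard 2 (Finset.univ : Finset (Fin (k+2))), ∏ i ∈ t, P i
  have h5 : 2 * S2 ≤ ((k:ℝ) + 1) * S1 := by nlinarith [hcheb, hcs]
  have hn0 : (0:ℝ) ≤ (k:ℝ) + 2 := by positivity
  nlinarith [mul_le_mul_of_nonneg_left h5 hn0, hc3, hcs, hcheb]

lemma esymm_deriv {n : ℕ} (hn : 1 ≤ n) (s : Multiset ℝ) (hs : Multiset.card s = n) :
    ∃ s' : Multiset ℝ, Multiset.card s' = n - 1 ∧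
      ∀ j, j ≤ n - 1 → (n : ℝ) * s'.esymm j = ((n : ℝ) - j) * s.esymm j := by
  classical
  set f : Polynomial ℝ := (s.map fun a => Polynomial.X - Polynomial.C a).prod with hf
  have hmonic : f.Monic :=
    Polynomial.monic_multiset_prod_of_monic s _ (fun a _ => Polynomial.monic_X_sub_C a)
  have hdeg : f.natDegree = n := by
    rw [hf, Polynomial.natDegree_multiset_prod_X_sub_C_eq_card, hs]
  have hroots : f.roots = s := Polynomial.roots_multiset_prod_X_sub_C s
  set g := Polynomial.derivative f with hg
  have hle1 : n ≤ Multiset.card g.roots + 1 := by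
    have := Polynomial.card_roots_le_derivative f
    rwa [hroots, hs] at this
  have hle2 : g.natDegree ≤ n - 1 := by
    rw [hg, ← hdeg]
    exact Polynomial.natDegree_derivative_le f
  have hle3 : Multiset.card g.roots ≤ g.natDegree := Polynomial.card_roots' g
  have hgdeg : g.natDegree = n - 1 := by omega
  have hgcard : Multiset.card g.roots = n - 1 := by omega
  have hflead : f.coeff n = 1 := by
    rw [← hdeg]; exact hmonic.coeff_natDegree
  have hglead : g.leadingCoeff = (n : ℝ) := by
    rw [Polynomial.leadingCoeff, hgdeg, hg, Polynomial.coeff_derivative,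
      Nat.sub_add_cancel hn, hflead, one_mul]
    push_cast [Nat.cast_sub hn]
    ring
  refine ⟨g.roots, hgcard, fun j hj => ?_⟩
  have hcoefff : f.coeff (n - j) = (-1 : ℝ) ^ j * s.esymm j := by
    have h := Polynomial.coeff_eq_esymm_roots_of_card
      (p := f) (by rw [hroots, hs, hdeg]) (k := n - j) (by omega)
    rw [hdeg, hroots, show n - (n - j) = j by omega, hmonic.leadingCoeff, one_mul] at h
    exact h
  have hcoeffg : g.coeff (n - 1 - j) = (n : ℝ) * ((-1 : ℝ) ^ j * g.roots.esymm j) := by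
    have h := Polynomial.coeff_eq_esymm_roots_of_card
      (p := g) (by rw [hgcard, hgdeg]) (k := n - 1 - j) (by omega)
    rw [hgdeg, show n - 1 - (n - 1 - j) = j by omega, hglead] at h
    rw [h]; ring
  have hder : g.coeff (n - 1 - j) = f.coeff (n - j) * ((n : ℝ) - j) := by
    rw [hg, Polynomial.coeff_derivative, show n - 1 - j + 1 = n - j by omega]
    congr 1
    push_cast [Nat.cast_sub (show j ≤ n by omega), Nat.cast_sub (show j ≤ n - 1 by omega),
      Nat.cast_sub hn]
    ring
  rw [hcoeffg, hcoefff] at hder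
  have hne : ((-1 : ℝ) ^ j) ≠ 0 := by positivity
  apply mul_left_cancel₀ hne
  rw [show (-1:ℝ)^j * ((n:ℝ) * Multiset.esymm g.roots j)
      = (n:ℝ) * ((-1:ℝ)^j * Multiset.esymm g.roots j) by ring, hder]
  ring

lemma newton_multiset : ∀ n : ℕ, ∀ s : Multiset ℝ, Multiset.card s = n → ∀ k : ℕ, k + 2 ≤ n →
    s.esymm k * s.esymm (k+2) * (n.choose (k+1) : ℝ) ^ 2
      ≤ (s.esymm (k+1)) ^ 2 * (n.choose k : ℝ) * (n.choose (k+2) : ℝ) := by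
  intro n
  induction n using Nat.strong_induction_on with
  | _ n ih =>
    intro s hs k hk
    rcases eq_or_lt_of_le hk with heq | hlt
    · subst heq
      have h' : ∃ g : Fin (k+2) → ℝ, Multiset.map g Finset.univ.val = s := by
        rw [← hs]; exact exists_tuple s
      obtain ⟨g, hg⟩ := h'
      have h := newton_top k g
      simp only [esymmFin_eq] at h
      rw [hg] at h
      exact h
    · have hn1 : 1 ≤ n := by omega
      have hnpos : (0:ℝ) < (n:ℝ) := by exact_mod_cast Nat.pos_of_ne_zero (by omega)
      obtain ⟨s', hs'card, hrel⟩ := esymm_deriv hn1 s hs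
      have hIH := ih (n-1) (by omega) s' hs'card k (by omega)
      have hchoose : ∀ j, j ≤ n → (((n-1).choose j : ℕ) : ℝ)
          = (((n:ℝ) - j)/(n:ℝ)) * (n.choose j : ℝ) := by
        intro j hj
        have h := Nat.choose_mul_succ_eq (n-1) j
        rw [show n - 1 + 1 = n from by omega] at h
        have hcast := congrArg (Nat.cast (R := ℝ)) h
        push_cast [Nat.cast_sub hj] at hcast
        field_simp
        linarith [hcast]
      have hesymm : ∀ j, j ≤ n - 1 → s'.esymm j = (((n:ℝ) - j)/(n:ℝ)) * s.esymm j := by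
        intro j hj
        have h := hrel j hj
        field_simp
        linarith [h]
      rw [hesymm k (by omega), hesymm (k+1) (by omega), hesymm (k+2) (by omega),
        hchoose k (by omega), hchoose (k+1) (by omega), hchoose (k+2) (by omega)] at hIH
      have h1 : (0:ℝ) < (n:ℝ) - k := by
        have : (k:ℝ) < (n:ℝ) := by exact_mod_cast (by omega : k < n)
        linarith
      have h2 : (0:ℝ) < (n:ℝ) - ((k:ℝ)+1) := by
        have : ((k:ℝ)+1) < (n:ℝ) := by exact_mod_cast (by omega : k+1 < n)
        linarith
      have h3 : (0:ℝ) < (n:ℝ) - ((k:ℝ)+2) := by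
        have : ((k:ℝ)+2) < (n:ℝ) := by exact_mod_cast (by omega : k+2 < n)
        linarith
      have hc : (0:ℝ) < (((n:ℝ)-k)/(n:ℝ)) * ((((n:ℝ)-((k:ℝ)+1))/(n:ℝ))^2)
          * (((n:ℝ)-((k:ℝ)+2))/(n:ℝ)) :=
        mul_pos (mul_pos (div_pos h1 hnpos) (pow_pos (div_pos h2 hnpos) 2))
          (div_pos h3 hnpos)
      refine le_of_mul_le_mul_left ?_ hc
      push_cast at hIH ⊢
      convert hIH using 1
      · rfl
      all_goals ring

lemma newton_norm (n : ℕ) (lam : Fin n → ℝ) (k : ℕ) (h : k + 2 ≤ n) :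
    (esymmFin n k lam / (n.choose k : ℝ)) * (esymmFin n (k+2) lam / (n.choose (k+2) : ℝ))
      ≤ (esymmFin n (k+1) lam / (n.choose (k+1) : ℝ)) ^ 2 := by
  have hint := newton_multiset n (Multiset.map lam Finset.univ.val) (by simp) k h
  simp only [← esymmFin_eq] at hint
  have c0 : (0:ℝ) < (n.choose k : ℝ) := by exact_mod_cast Nat.choose_pos (by omega)
  have c1 : (0:ℝ) < (n.choose (k+1) : ℝ) := by exact_mod_cast Nat.choose_pos (by omega)
  have c2 : (0:ℝ) < (n.choose (k+2) : ℝ) := by exact_mod_cast Nat.choose_pos h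
  rw [div_mul_div_comm, div_pow, div_le_div_iff₀ (by positivity) (by positivity)]
  nlinarith [hint]

theorem newton_maclaurin_inequality'
    (n k l : ℕ) (hl1 : 1 ≤ l) (hlk : l ≤ k) (hkn : k ≤ n)
    (lam : Fin n → ℝ)
    (hΓ : ∀ i : ℕ, 1 ≤ i → i ≤ k → 0 < esymmFin n i lam) :
    (esymmFin n k lam / (n.choose k : ℝ)) ^ ((1 : ℝ) / k) ≤
      (esymmFin n l lam / (n.choose l : ℝ)) ^ ((1 : ℝ) / l) := by
  set p : ℕ → ℝ := fun j => esymmFin n j lam / (n.choose j : ℝ) with hp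
  have hp0 : p 0 = 1 := by simp [hp, esymmFin_zero]
  have hpos : ∀ j, j ≤ k → 0 < p j := by
    intro j hj
    rcases Nat.eq_zero_or_pos j with rfl | hj1
    · rw [hp0]; norm_num
    · exact div_pos (hΓ j hj1 hj)
        (by exact_mod_cast Nat.choose_pos (le_trans hj hkn))
  have hnewton : ∀ j, j + 2 ≤ k → p j * p (j+2) ≤ p (j+1) ^ 2 :=
    fun j hj => newton_norm n lam j (le_trans hj hkn)
  have hQ : ∀ m, 1 ≤ m → m + 1 ≤ k → p (m+1) ^ m ≤ p m ^ (m+1) := by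
    intro m
    induction m with
    | zero => omega
    | succ m ihm =>
      intro _ hmk
      rcases Nat.eq_zero_or_pos m with rfl | hm1
      · have h0 := hnewton 0 (by omega)
        rw [hp0, one_mul] at h0
        simpa using h0
      · have hihm := ihm hm1 (by omega)
        have hx := hpos (m+2) (by omega)
        have hy := hpos (m+1) (by omega)
        have hz := hpos m (by omega)
        have h1 : p m * p (m+2) ≤ p (m+1) ^ 2 := hnewton m (by omega)
        have h2 : (p m * p (m+2)) ^ (m+1) ≤ (p (m+1) ^ 2) ^ (m+1) :=
          pow_le_pow_left₀ (by positivity) h1 (m+1)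
        have h5 : p (m+2) ^ (m+1) * p (m+1) ^ m ≤ p (m+1) ^ (m+2) * p (m+1) ^ m := by
          calc p (m+2) ^ (m+1) * p (m+1) ^ m
              ≤ p (m+2) ^ (m+1) * p m ^ (m+1) :=
                mul_le_mul_of_nonneg_left hihm (by positivity)
            _ = (p m * p (m+2)) ^ (m+1) := by rw [mul_pow]; ring
            _ ≤ (p (m+1) ^ 2) ^ (m+1) := h2
            _ = p (m+1) ^ (m+2) * p (m+1) ^ m := by
                rw [← pow_mul, ← pow_add]; congr 1; omega
        exact le_of_mul_le_mul_right h5 (pow_pos hy m)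
  have hR : ∀ m, l ≤ m → m ≤ k → p m ^ l ≤ p l ^ m := by
    intro m hlm
    induction m, hlm using Nat.le_induction with
    | base => intro _; exact le_refl _
    | succ m hlm ihm =>
      intro hm1k
      have hQm := hQ m (le_trans hl1 hlm) hm1k
      have hxm1 := hpos (m+1) hm1k
      have hxm := hpos m (by omega)
      have hxl' : 0 < p l := hpos l (le_trans (le_trans hlm (Nat.le_succ m)) hm1k)
      have key : (p (m+1) ^ l) ^ m ≤ (p l ^ (m+1)) ^ m := by
        calc (p (m+1) ^ l) ^ m = (p (m+1) ^ m) ^ l := by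
              rw [← pow_mul, ← pow_mul, Nat.mul_comm]
          _ ≤ (p m ^ (m+1)) ^ l := pow_le_pow_left₀ (by positivity) hQm l
          _ = (p m ^ l) ^ (m+1) := by rw [← pow_mul, ← pow_mul, Nat.mul_comm]
          _ ≤ (p l ^ m) ^ (m+1) := pow_le_pow_left₀ (by positivity) (ihm (by omega)) (m+1)
          _ = (p l ^ (m+1)) ^ m := by rw [← pow_mul, ← pow_mul, Nat.mul_comm]
      exact le_of_pow_le_pow_left₀ (by omega) (by positivity) key
  have hfin : p k ^ l ≤ p l ^ k := hR k hlk le_rfl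
  have hxk : 0 < p k := hpos k le_rfl
  have hxl : 0 < p l := hpos l hlk
  have hkR : ((k:ℝ)) ≠ 0 := by
    have : (0:ℝ) < k := by exact_mod_cast (by omega : 0 < k)
    linarith
  have hlR : ((l:ℝ)) ≠ 0 := by
    have : (0:ℝ) < l := by exact_mod_cast (by omega : 0 < l)
    linarith
  have e1 : p k ^ ((1:ℝ)/(k:ℝ)) = (p k ^ l) ^ ((1:ℝ)/((l:ℝ)*(k:ℝ))) := by
    rw [← Real.rpow_natCast (p k) l, ← Real.rpow_mul hxk.le]
    congr 1
    field_simp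
  have e2 : p l ^ ((1:ℝ)/(l:ℝ)) = (p l ^ k) ^ ((1:ℝ)/((l:ℝ)*(k:ℝ))) := by
    rw [← Real.rpow_natCast (p l) k, ← Real.rpow_mul hxl.le]
    congr 1
    field_simp
  show p k ^ ((1:ℝ)/(k:ℝ)) ≤ p l ^ ((1:ℝ)/(l:ℝ))
  rw [e1, e2]
  exact Real.rpow_le_rpow (by positivity) hfin (by positivity)

/-- **Newton–Maclaurin inequality.** For `λ` in the Gårding cone `Γ_k` and
`1 ≤ l ≤ k ≤ n`, `(σ_k(λ)/binom(n,k))^(1/k) ≤ (σ_l(λ)/binom(n,l))^(1/l)`. -/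
theorem newton_maclaurin_inequality
    (n k l : ℕ) (hl1 : 1 ≤ l) (hlk : l ≤ k) (hkn : k ≤ n)
    (lam : Fin n → ℝ)
    (hΓ : ∀ i : ℕ, 1 ≤ i → i ≤ k → 0 < esymmFin n i lam) :
    (esymmFin n k lam / (n.choose k : ℝ)) ^ ((1 : ℝ) / k) ≤
      (esymmFin n l lam / (n.choose l : ℝ)) ^ ((1 : ℝ) / l) := by
  exact newton_maclaurin_inequality' n k l hl1 hlk hkn lam hΓ
end
end
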